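/- arXiv:0907.3307 — 7 statements merged into one kernel-verified Lean document; each statement's English description precedes it below -/
import Mathlib

section
/- Let B > 0 and 0 ≤ ε < 1, and set M = (B(1-ε)²/(2(2ε+n(1-ε))))^(1/(1-ε)). Suppose u is continuous on the closed unit ball of ℝⁿ, nonnegative on the open unit ball D₁, C² on the open set ω = {x ∈ D₁ : u(x) ≠ 0}, and satisfies Δu(x) - B·u(x)^ε ≥ 0 on ω. If u(0) ≠ 0, then sup_{x ∈ D₁} u(x) > M. -/
/-
Suppose `u ≤ M` on the unit ball, hence on its boundary sphere. With `q = 1 / (1 - ε)` and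
`δ = u 0 / 2`, compare `u` with `v x = M |x|^(2q) + δ (1 - |x|²)`: the maximum of `u - v` over the
closed ball is at least `(u - v) 0 = δ > 0`, while `u - v ≤ 0` on the sphere, so it is attained
at an interior point `x₀`, where `u x₀ > 0`. There `Δu ≤ Δv`, i.e. along each coordinate line the
second derivative of `u` is at most that of `v` (second-derivative test applied to `u - v`).
Summing, and using the choice of `M`,
`Δu x₀ ≤ B M^ε |x₀|^(2q-2) - 2nδ < B (M |x₀|^(2q))^ε ≤ B (u x₀)^ε ≤ Δu x₀`, a contradiction.
-/

open Filter Set Metric Topology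

noncomputable def lap {n : ℕ} (u : EuclideanSpace ℝ (Fin n) → ℝ)
    (x : EuclideanSpace ℝ (Fin n)) : ℝ :=
  ∑ i, iteratedFDeriv ℝ 2 u x ![EuclideanSpace.single i 1, EuclideanSpace.single i 1]

-- Only `≤`: at `r = 0`, `p = 0` the right side is `0 ^ 0 = 1`.
theorem mul_rpow_sub_one_le {r : ℝ} (hr : 0 ≤ r) (p : ℝ) : r * r ^ (p - 1) ≤ r ^ p := by
  rcases hr.eq_or_lt with rfl | hr
  · simpa using Real.rpow_nonneg le_rfl p
  · rw [Real.rpow_sub_one hr.ne', mul_div_cancel₀ _ hr.ne']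

-- `M` is chosen so that `Δ (M |x|^(2q)) = B (M |x|^(2q))^ε`, where `q = 1 / (1 - ε)` and
-- `Δ |x|^(2q) = 2q (n + 2(q - 1)) |x|^(2q - 2)`.
theorem pos_and_mul_coeff_eq_mul_rpow {n B ε q M : ℝ} (hn : 0 < n) (hB : 0 < B) (hε0 : 0 ≤ ε)
    (hε1 : ε < 1) (hq : q = 1 / (1 - ε))
    (hM : M = (B * (1 - ε) ^ 2 / (2 * (2 * ε + n * (1 - ε)))) ^ q) :
    0 < M ∧ M * (2 * q * (n + 2 * (q - 1))) = B * M ^ ε := by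
  have h1ε : 0 < 1 - ε := by linarith
  have hK : 0 < 2 * (2 * ε + n * (1 - ε)) := by positivity
  have hM0 : 0 < M := by rw [hM]; positivity
  have hM1 : M ^ (1 - ε) = B * (1 - ε) ^ 2 / (2 * (2 * ε + n * (1 - ε))) := by
    rw [hM, hq, ← Real.rpow_mul (by positivity), one_div_mul_cancel h1ε.ne', Real.rpow_one]
  refine ⟨hM0, ?_⟩
  calc M * (2 * q * (n + 2 * (q - 1))) = M ^ ε * M ^ (1 - ε) * (2 * q * (n + 2 * (q - 1))) := by
        rw [← Real.rpow_add hM0]; norm_num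
    _ = B * M ^ ε := by rw [hM1, hq]; field_simp; ring

theorem hasDerivAt_sq_add_rpow (c : ℝ) {q : ℝ} (hq : 1 ≤ q) (t : ℝ) :
    HasDerivAt (fun s => (c + s ^ 2) ^ q) (2 * q * (t * (c + t ^ 2) ^ (q - 1))) t :=
  (((hasDerivAt_pow 2 t).const_add c).rpow_const (Or.inr hq)).congr_deriv (by push_cast; ring)

theorem hasDerivAt_mul_sq_add_rpow {c p : ℝ} (hc : 0 ≤ c) (hp : 0 ≤ p) (a : ℝ) :
    HasDerivAt (fun s => s * (c + s ^ 2) ^ p)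
      ((c + a ^ 2) ^ p + 2 * p * a ^ 2 * (c + a ^ 2) ^ (p - 1)) a := by
  rcases (add_nonneg hc (sq_nonneg a)).eq_or_lt with hzero | hpos
  · obtain ⟨rfl, rfl⟩ : c = 0 ∧ a = 0 := by constructor <;> nlinarith [sq_nonneg a]
    -- For `0 < p < 1`, `rpow` is not differentiable at `0`, but the slope `(s ^ 2) ^ p` tends
    -- to `0`.
    rcases hp.eq_or_lt with rfl | hp
    · exact (hasDerivAt_id' (0 : ℝ)).congr_of_eventuallyEq (by simp) |>.congr_deriv (by simp)
    rw [hasDerivAt_iff_tendsto_slope_zero]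
    have hlim : Tendsto (fun s : ℝ => (s ^ 2) ^ p) (𝓝 0) (𝓝 0) := by
      have := (Real.continuousAt_rpow_const 0 p (Or.inr hp.le)).tendsto.comp
        (((continuous_pow 2).tendsto (0 : ℝ)).trans_eq (by simp))
      simpa [Function.comp_def, Real.zero_rpow hp.ne'] using this
    simp only [zero_add, smul_eq_mul, zero_pow two_ne_zero, Real.zero_rpow hp.ne', mul_zero,
      zero_mul, sub_zero, add_zero]
    refine (hlim.mono_left nhdsWithin_le_nhds).congr' ?_
    filter_upwards [self_mem_nhdsWithin] with s hs
    field_simp [show s ≠ 0 from hs]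
  · exact ((hasDerivAt_id' a).mul (((hasDerivAt_pow 2 a).const_add c).rpow_const
      (Or.inl hpos.ne'))).congr_deriv (by push_cast; ring)

theorem IsLocalMax.deriv_deriv_nonpos {f : ℝ → ℝ} {a : ℝ} (h : IsLocalMax f a)
    (hc : ContinuousAt f a) : deriv (deriv f) a ≤ 0 := by
  -- If `f'' a > 0`, then `a` is also a local minimum, so `f` is constant near `a`.
  by_contra! hpos
  have hconst : ∀ᶠ t in 𝓝 a, f t = f a := by
    filter_upwards [h, isLocalMin_of_deriv_deriv_pos hpos h.deriv_eq_zero hc] with t h₁ h₂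
    exact le_antisymm h₁ h₂
  have hderiv : deriv f =ᶠ[𝓝 a] fun _ => 0 := by
    filter_upwards [hconst.eventually_nhds] with t ht
    exact (EventuallyEq.deriv_eq ht).trans (deriv_const t _)
  simp [hderiv.deriv_eq] at hpos

section Line

variable {E : Type*} [NormedAddCommGroup E] [NormedSpace ℝ E] {f : E → ℝ} {x : E}

theorem hasDerivAt_add_smul (x y : E) (t : ℝ) : HasDerivAt (fun s : ℝ => x + s • y) y t := by
  simpa using ((hasDerivAt_id t).smul_const y).const_add x

theorem ContDiffAt.eventually_hasDerivAt_comp_add_smul (hf : ContDiffAt ℝ 2 f x) (y : E) :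
    ∀ᶠ t in 𝓝 (0 : ℝ), HasDerivAt (fun s => f (x + s • y)) (fderiv ℝ f (x + t • y) y) t := by
  have hline : Tendsto (fun t : ℝ => x + t • y) (𝓝 0) (𝓝 x) := by
    simpa using ((hasDerivAt_add_smul x y 0).continuousAt).tendsto
  filter_upwards [hline.eventually (hf.eventually (by simp))] with t ht
  exact (ht.differentiableAt (by simp)).hasFDerivAt.comp_hasDerivAt t (hasDerivAt_add_smul x y t)

theorem ContDiffAt.hasDerivAt_fderiv_comp_add_smul (hf : ContDiffAt ℝ 2 f x) (y : E) :
    HasDerivAt (fun t : ℝ => fderiv ℝ f (x + t • y) y) (iteratedFDeriv ℝ 2 f x ![y, y]) 0 := by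
  have hf' : HasFDerivAt (fderiv ℝ f) (fderiv ℝ (fderiv ℝ f) x) (x + (0 : ℝ) • y) := by
    rw [zero_smul, add_zero]
    exact ((hf.fderiv_right (m := 1) (by norm_num)).differentiableAt (by norm_num)).hasFDerivAt
  rw [iteratedFDeriv_two_apply]
  exact (ContinuousLinearMap.apply ℝ ℝ y).hasFDerivAt.comp_hasDerivAt 0
    (hf'.comp_hasDerivAt 0 (hasDerivAt_add_smul x y 0))

theorem iteratedFDeriv_two_le_of_isLocalMax_sub {g : E → ℝ} {y : E} {g' : ℝ → ℝ} {c : ℝ}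
    (hf : ContDiffAt ℝ 2 f x) (hmax : IsLocalMax (f - g) x)
    (hg : ∀ᶠ t in 𝓝 (0 : ℝ), HasDerivAt (fun t => g (x + t • y)) (g' t) t)
    (hg' : HasDerivAt g' c 0) :
    iteratedFDeriv ℝ 2 f x ![y, y] ≤ c := by
  set F : ℝ → ℝ := fun t => f (x + t • y) - g (x + t • y)
  have hF : ∀ᶠ t in 𝓝 (0 : ℝ), HasDerivAt F (fderiv ℝ f (x + t • y) y - g' t) t := by
    filter_upwards [hf.eventually_hasDerivAt_comp_add_smul y, hg] with t hft hgt
    exact hft.sub hgt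
  have hF' : HasDerivAt (deriv F) (iteratedFDeriv ℝ 2 f x ![y, y] - c) 0 :=
    ((hf.hasDerivAt_fderiv_comp_add_smul y).sub hg').congr_of_eventuallyEq
      (hF.mono fun t ht => ht.deriv)
  have hFmax : IsLocalMax F 0 :=
    (by simpa using hmax : IsLocalMax (f - g) (x + (0 : ℝ) • y)).comp_continuous
      (g := fun t : ℝ => x + t • y) (hasDerivAt_add_smul x y 0).continuousAt
  have := hFmax.deriv_deriv_nonpos hF.self_of_nhds.continuousAt
  rw [hF'.deriv] at this
  linarith

end Line

namespace EuclideanSpace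

variable {n : ℕ}

theorem sq_apply_le_norm_sq (x : EuclideanSpace ℝ (Fin n)) (i : Fin n) : x i ^ 2 ≤ ‖x‖ ^ 2 := by
  simpa using pow_le_pow_left₀ (abs_nonneg _) (PiLp.norm_apply_le x i) 2

theorem sum_sq_apply (x : EuclideanSpace ℝ (Fin n)) : ∑ i, x i ^ 2 = ‖x‖ ^ 2 := by
  simp [EuclideanSpace.norm_sq_eq]

theorem norm_add_smul_single_sq (x : EuclideanSpace ℝ (Fin n)) (i : Fin n) (t : ℝ) :
    ‖x + t • EuclideanSpace.single i 1‖ ^ 2 = ‖x‖ ^ 2 - x i ^ 2 + (x i + t) ^ 2 := by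
  rw [norm_add_sq_real, inner_smul_right, EuclideanSpace.inner_single_right, norm_smul,
    PiLp.norm_single]
  simp only [Real.ringHom_apply, one_mul, Real.norm_eq_abs, norm_one, mul_one, sq_abs]
  ring

end EuclideanSpace

section Barrier

variable {E : Type*} [NormedAddCommGroup E]

noncomputable def barrier (M δ q : ℝ) (x : E) : ℝ := M * (‖x‖ ^ 2) ^ q + δ * (1 - ‖x‖ ^ 2)

theorem continuous_barrier (M δ : ℝ) {q : ℝ} (hq : 0 ≤ q) :
    Continuous (barrier (E := E) M δ q) := by
  unfold barrier
  fun_prop (disch := exact Or.inr hq)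

theorem barrier_zero (M δ : ℝ) {q : ℝ} (hq : q ≠ 0) : barrier (E := E) M δ q 0 = δ := by
  simp [barrier, Real.zero_rpow hq]

theorem barrier_of_norm_eq_one (M δ q : ℝ) {x : E} (hx : ‖x‖ = 1) : barrier M δ q x = M := by
  simp [barrier, hx]

theorem exists_isLocalMax_sub_barrier [ProperSpace E] {u : E → ℝ} {M δ q : ℝ} (hq : 0 < q)
    (hδ : 0 < δ) (hu : ContinuousOn u (closedBall 0 1)) (hM : ∀ x ∈ sphere (0 : E) 1, u x ≤ M)
    (hu0 : 2 * δ ≤ u 0) :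
    ∃ x ∈ ball (0 : E) 1, IsLocalMax (u - barrier M δ q) x ∧ M * (‖x‖ ^ 2) ^ q + δ ≤ u x := by
  obtain ⟨x, hx, hmax⟩ := (isCompact_closedBall (0 : E) 1).exists_isMaxOn
    ⟨0, mem_closedBall_self zero_le_one⟩ (hu.sub (continuous_barrier M δ hq.le).continuousOn)
  have hδx : δ ≤ u x - barrier M δ q x := by
    have h0 : u 0 - barrier M δ q (0 : E) ≤ u x - barrier M δ q x :=
      hmax (mem_closedBall_self zero_le_one)
    rw [barrier_zero M δ hq.ne'] at h0
    linarith
  have hxball : x ∈ ball (0 : E) 1 := by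
    refine lt_of_le_of_ne (mem_closedBall.mp hx) fun hx1 => ?_
    rw [dist_zero_right] at hx1
    have := hM x (by simpa using hx1)
    rw [barrier_of_norm_eq_one M δ q hx1] at hδx
    linarith
  refine ⟨x, hxball, hmax.isLocalMax (closedBall_mem_nhds_of_mem hxball), ?_⟩
  have hx1 : ‖x‖ ^ 2 ≤ 1 := pow_le_one₀ (norm_nonneg x) (mem_closedBall_zero_iff.mp hx)
  unfold barrier at hδx
  nlinarith

end Barrier

section Laplacian

variable {n : ℕ} {f : EuclideanSpace ℝ (Fin n) → ℝ} {x : EuclideanSpace ℝ (Fin n)} {M δ q : ℝ}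

theorem iteratedFDeriv_two_single_le_of_isLocalMax_sub_barrier (hq : 1 ≤ q)
    (hf : ContDiffAt ℝ 2 f x) (hmax : IsLocalMax (f - barrier M δ q) x) (i : Fin n) :
    iteratedFDeriv ℝ 2 f x ![EuclideanSpace.single i 1, EuclideanSpace.single i 1] ≤
      M * (2 * q * ((‖x‖ ^ 2) ^ (q - 1) + 2 * (q - 1) * x i ^ 2 * (‖x‖ ^ 2) ^ (q - 1 - 1)))
        - 2 * δ := by
  set c := ‖x‖ ^ 2 - x i ^ 2
  have hc : 0 ≤ c := sub_nonneg.mpr (EuclideanSpace.sq_apply_le_norm_sq x i)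
  have hline : ∀ t : ℝ, barrier M δ q (x + t • EuclideanSpace.single i 1) =
      M * (c + (x i + t) ^ 2) ^ q + δ * (1 - (c + (x i + t) ^ 2)) := fun t => by
    rw [barrier, EuclideanSpace.norm_add_smul_single_sq]
  set g : ℝ → ℝ := fun s => M * (c + s ^ 2) ^ q + δ * (1 - (c + s ^ 2))
  set g' : ℝ → ℝ := fun s => M * (2 * q * (s * (c + s ^ 2) ^ (q - 1))) - 2 * δ * s
  have hg : ∀ s, HasDerivAt g (g' s) s := fun s =>
    (((hasDerivAt_sq_add_rpow c hq s).const_mul M).add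
      ((((hasDerivAt_pow 2 s).const_add c).const_sub 1).const_mul δ)).congr_deriv
        (by simp only [Nat.cast_ofNat, Nat.add_one_sub_one, pow_one, mul_neg]; ring)
  have hg' : HasDerivAt g'
      (M * (2 * q * ((c + x i ^ 2) ^ (q - 1) + 2 * (q - 1) * x i ^ 2 * (c + x i ^ 2) ^ (q - 1 - 1)))
        - 2 * δ) (x i + 0) := by
    rw [add_zero]
    exact ((((hasDerivAt_mul_sq_add_rpow hc (sub_nonneg.mpr hq) (x i)).const_mul (2 * q)).const_mul
      M).sub ((hasDerivAt_id' (x i)).const_mul (2 * δ))).congr_deriv (by ring)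
  rw [sub_add_cancel] at hg'
  refine iteratedFDeriv_two_le_of_isLocalMax_sub hf hmax (g' := fun t => g' (x i + t))
    (Eventually.of_forall fun t => ?_) (hg'.comp_const_add (x i) 0)
  rw [funext hline]
  exact (hg (x i + t)).comp_const_add (x i) t

theorem lap_le_of_isLocalMax_sub_barrier (hM : 0 ≤ M) (hq : 1 ≤ q) (hf : ContDiffAt ℝ 2 f x)
    (hmax : IsLocalMax (f - barrier M δ q) x) :
    lap f x ≤ M * (2 * q * (n + 2 * (q - 1))) * (‖x‖ ^ 2) ^ (q - 1) - 2 * n * δ := by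
  set r := ‖x‖ ^ 2
  have hr : r * r ^ (q - 1 - 1) ≤ r ^ (q - 1) := mul_rpow_sub_one_le (by positivity) _
  calc lap f x ≤ ∑ i : Fin n,
        (M * (2 * q * (r ^ (q - 1) + 2 * (q - 1) * x i ^ 2 * r ^ (q - 1 - 1))) - 2 * δ) :=
      Finset.sum_le_sum fun i _ =>
        iteratedFDeriv_two_single_le_of_isLocalMax_sub_barrier hq hf hmax i
    _ = M * (2 * q * (n * r ^ (q - 1) + 2 * (q - 1) * r * r ^ (q - 1 - 1))) - 2 * n * δ := by
      simp only [Finset.sum_sub_distrib, ← Finset.mul_sum, Finset.sum_add_distrib,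
        ← Finset.sum_mul, EuclideanSpace.sum_sq_apply, Finset.sum_const, Finset.card_univ,
        Fintype.card_fin, nsmul_eq_mul]
      ring
    _ ≤ M * (2 * q * (n + 2 * (q - 1))) * r ^ (q - 1) - 2 * n * δ := by
      have : 0 ≤ M * (2 * q) * (2 * (q - 1)) := by
        have : 0 ≤ q - 1 := by linarith
        positivity
      nlinarith

end Laplacian

theorem stmt1 (n : ℕ) (hn : 1 ≤ n) (B ε : ℝ) (hB : 0 < B) (hε0 : 0 ≤ ε) (hε1 : ε < 1)
    (M : ℝ) (hM : M = (B * (1 - ε) ^ 2 / (2 * (2 * ε + n * (1 - ε)))) ^ (1 / (1 - ε)))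
    (u : EuclideanSpace ℝ (Fin n) → ℝ)
    (hcont : ContinuousOn u (Metric.closedBall 0 1))
    (hnonneg : ∀ x ∈ Metric.ball (0 : EuclideanSpace ℝ (Fin n)) 1, 0 ≤ u x)
    (hC2 : ContDiffOn ℝ 2 u {x | x ∈ Metric.ball (0 : EuclideanSpace ℝ (Fin n)) 1 ∧ u x ≠ 0})
    (hineq : ∀ x ∈ {x | x ∈ Metric.ball (0 : EuclideanSpace ℝ (Fin n)) 1 ∧ u x ≠ 0},
      lap u x - B * u x ^ ε ≥ 0)
    (h0 : u 0 ≠ 0) :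
    ∃ x ∈ Metric.ball (0 : EuclideanSpace ℝ (Fin n)) 1, M < u x := by
  by_contra! hle
  set q : ℝ := 1 / (1 - ε) with hq_def
  have hq : 1 ≤ q := by rw [hq_def, le_div_iff₀ (by linarith)]; linarith
  have hqε : q * ε = q - 1 := by rw [hq_def]; field_simp [show 1 - ε ≠ 0 by linarith]; ring
  have hn' : (1 : ℝ) ≤ n := by exact_mod_cast hn
  obtain ⟨hM0, hMK⟩ := pos_and_mul_coeff_eq_mul_rpow (by linarith) hB hε0 hε1 hq_def hM
  have hu0 : 0 < u 0 := (hnonneg 0 (mem_ball_self one_pos)).lt_of_ne' h0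
  have hsphere : ∀ x ∈ sphere (0 : EuclideanSpace ℝ (Fin n)) 1, u x ≤ M := fun x hx => by
    refine le_on_closure hle ?_ continuousOn_const ?_ <;> rw [closure_ball _ one_ne_zero]
    exacts [hcont, sphere_subset_closedBall hx]
  obtain ⟨x₀, hx₀, hmax, hux₀⟩ := exists_isLocalMax_sub_barrier (q := q) (δ := u 0 / 2)
    (by linarith) (by positivity) hcont hsphere (by linarith)
  have hω : x₀ ∈ {x | x ∈ ball 0 1 ∧ u x ≠ 0} :=
    ⟨hx₀, ((by positivity : 0 < M * (‖x₀‖ ^ 2) ^ q + u 0 / 2).trans_le hux₀).ne'⟩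
  have hωopen : IsOpen {x | x ∈ ball (0 : EuclideanSpace ℝ (Fin n)) 1 ∧ u x ≠ 0} :=
    (hcont.mono ball_subset_closedBall).isOpen_inter_preimage isOpen_ball isOpen_compl_singleton
  have hupper := lap_le_of_isLocalMax_sub_barrier hM0.le hq
    (hC2.contDiffAt (hωopen.mem_nhds hω)) hmax
  have hlower : B * (M * (‖x₀‖ ^ 2) ^ q) ^ ε ≤ lap u x₀ :=
    (by gcongr; linarith : B * (M * (‖x₀‖ ^ 2) ^ q) ^ ε ≤ B * u x₀ ^ ε).trans
      (by linarith [hineq x₀ hω])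
  rw [Real.mul_rpow hM0.le (by positivity), ← Real.rpow_mul (by positivity), hqε] at hlower
  rw [hMK] at hupper
  linarith [mul_pos (by linarith : (0 : ℝ) < n) hu0]
end

section
/- Let 0 < α < 1 and B > 0. Suppose u : ℝ → ℝ is C¹ on (-1,1) and satisfies u'(x) = B|u(x)|^α for all x ∈ (-1,1). If u(0) ≠ 0 then sup_{-1 < x < 1} |u(x)| > ((1-α)B)^(1/(1-α)). -/
/-!
Since `u' ≥ 0`, a solution with `u 0 > 0` stays positive on `[0, 1)`, where `v = u ^ (1 - α)`
satisfies `v' = (1 - α) B`. Hence `v x = u 0 ^ (1 - α) + (1 - α) B x`, which exceeds `(1 - α) B`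
for `x` close to `1`. The case `u 0 < 0` reduces to this one through the symmetry `u ↦ -u (-·)`.
-/

open Set Filter Topology

def SolvesPowerODE (B α : ℝ) (u : ℝ → ℝ) (s : Set ℝ) : Prop :=
  ∀ x ∈ s, HasDerivAt u (B * |u x| ^ α) x

namespace SolvesPowerODE

variable {B α : ℝ} {u : ℝ → ℝ} {s : Set ℝ}

theorem of_deriv_eq (hs : IsOpen s) (hu : DifferentiableOn ℝ u s)
    (hode : ∀ x ∈ s, deriv u x = B * |u x| ^ α) : SolvesPowerODE B α u s := fun x hx =>
  hode x hx ▸ (hu.differentiableAt (hs.mem_nhds hx)).hasDerivAt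

theorem continuousOn (h : SolvesPowerODE B α u s) : ContinuousOn u s :=
  fun x hx => (h x hx).continuousAt.continuousWithinAt

theorem neg_comp_neg (h : SolvesPowerODE B α u s) :
    SolvesPowerODE B α (fun x => -u (-x)) (-s) := by
  intro x hx
  have := ((h (-x) hx).comp x (hasDerivAt_neg x)).neg
  rw [mul_neg_one, neg_neg] at this
  rw [abs_neg]
  exact this

theorem monotoneOn (h : SolvesPowerODE B α u s) (hB : 0 ≤ B) (hs : Convex ℝ s) :
    MonotoneOn u s :=
  monotoneOn_of_hasDerivWithinAt_nonneg hs h.continuousOn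
    (fun x hx => (h x (interior_subset hx)).hasDerivWithinAt) (fun _ _ => by positivity)

theorem hasDerivAt_rpow_one_sub (h : SolvesPowerODE B α u s) {x : ℝ} (hx : x ∈ s)
    (hux : 0 < u x) : HasDerivAt (fun y => u y ^ (1 - α)) ((1 - α) * B) x := by
  have hu := h x hx
  rw [abs_of_pos hux] at hu
  convert hu.rpow_const (Or.inl hux.ne') using 1
  rw [sub_sub_cancel_left, Real.rpow_neg hux.le]
  field_simp

theorem rpow_one_sub_eq (h : SolvesPowerODE B α u s) (hB : 0 ≤ B) (hs : Convex ℝ s)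
    {a x : ℝ} (ha : a ∈ s) (hx : x ∈ s) (hax : a ≤ x) (hua : 0 < u a) :
    u x ^ (1 - α) = u a ^ (1 - α) + (1 - α) * B * (x - a) := by
  have hIcc : Icc a x ⊆ s := hs.ordConnected.out ha hx
  have hpos : ∀ y ∈ Icc a x, 0 < u y := fun y hy =>
    hua.trans_le (h.monotoneOn hB hs ha (hIcc hy) hy.1)
  rcases hax.eq_or_lt with rfl | hax
  · simp
  obtain ⟨c, -, hc⟩ := exists_hasDerivAt_eq_slope (fun y => u y ^ (1 - α)) (fun _ => (1 - α) * B)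
    hax ((h.continuousOn.mono hIcc).rpow_const fun y hy => Or.inl (hpos y hy).ne')
    fun y hy => h.hasDerivAt_rpow_one_sub (hIcc (Ioo_subset_Icc_self hy))
      (hpos y (Ioo_subset_Icc_self hy))
  rw [hc, div_mul_cancel₀ _ (sub_ne_zero.2 hax.ne')]
  ring

theorem exists_lt_of_pos (h : SolvesPowerODE B α u (Ioo (-1) 1)) (hα : α < 1) (hB : 0 < B)
    (hu0 : 0 < u 0) : ∃ x ∈ Ioo (-1 : ℝ) 1, ((1 - α) * B) ^ (1 / (1 - α)) < u x := by
  have h1α : 0 < 1 - α := sub_pos.2 hα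
  set c := (1 - α) * B
  have hlim : Tendsto (fun x => u 0 ^ (1 - α) + c * x) (𝓝[<] 1) (𝓝 (u 0 ^ (1 - α) + c)) := by
    simpa using ((by fun_prop : Continuous fun x : ℝ => u 0 ^ (1 - α) + c * x).tendsto 1).mono_left
      nhdsWithin_le_nhds
  obtain ⟨x, hcx, hx0⟩ := ((hlim.eventually (lt_mem_nhds (lt_add_of_pos_left c
    (Real.rpow_pos_of_pos hu0 _)))).and (Ioo_mem_nhdsLT zero_lt_one)).exists
  have hx : x ∈ Ioo (-1 : ℝ) 1 := ⟨by linarith [hx0.1], hx0.2⟩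
  have hux : 0 < u x := hu0.trans_le (h.monotoneOn hB.le (convex_Ioo _ _) (by norm_num) hx hx0.1.le)
  have hvx : u x ^ (1 - α) = u 0 ^ (1 - α) + c * x := by
    simpa using h.rpow_one_sub_eq hB.le (convex_Ioo _ _) (by norm_num) hx hx0.1.le hu0
  refine ⟨x, hx, ?_⟩
  calc c ^ (1 / (1 - α)) < (u x ^ (1 - α)) ^ (1 / (1 - α)) :=
        Real.rpow_lt_rpow (by positivity) (hvx ▸ hcx) (by positivity)
    _ = u x := by rw [one_div, Real.rpow_rpow_inv hux.le h1α.ne']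

end SolvesPowerODE

theorem stmt4_general (α B : ℝ) (hα1 : α < 1) (hB : 0 < B) (u : ℝ → ℝ)
    (hC1 : ContDiffOn ℝ 1 u (Set.Ioo (-1 : ℝ) 1))
    (hode : ∀ x ∈ Set.Ioo (-1 : ℝ) 1, deriv u x = B * |u x| ^ α)
    (h0 : u 0 ≠ 0) :
    ∃ x ∈ Set.Ioo (-1 : ℝ) 1, ((1 - α) * B) ^ (1 / (1 - α)) < |u x| := by
  have h : SolvesPowerODE B α u (Ioo (-1) 1) :=
    .of_deriv_eq isOpen_Ioo (hC1.differentiableOn one_ne_zero) hode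
  rcases h0.lt_or_gt with hneg | hpos
  · have hw : SolvesPowerODE B α (fun x => -u (-x)) (Ioo (-1) 1) := by
      simpa using h.neg_comp_neg
    obtain ⟨x, hx, hlt⟩ := hw.exists_lt_of_pos hα1 hB (by simpa using hneg)
    exact ⟨-x, ⟨by linarith [hx.2], by linarith [hx.1]⟩, lt_abs.2 (Or.inr hlt)⟩
  · obtain ⟨x, hx, hlt⟩ := h.exists_lt_of_pos hα1 hB hpos
    exact ⟨x, hx, hlt.trans_le (le_abs_self _)⟩

theorem stmt4 (α B : ℝ) (hα0 : 0 < α) (hα1 : α < 1) (hB : 0 < B) (u : ℝ → ℝ)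
    (hC1 : ContDiffOn ℝ 1 u (Set.Ioo (-1 : ℝ) 1))
    (hode : ∀ x ∈ Set.Ioo (-1 : ℝ) 1, deriv u x = B * |u x| ^ α)
    (h0 : u 0 ≠ 0) :
    ∃ x ∈ Set.Ioo (-1 : ℝ) 1, ((1 - α) * B) ^ (1 / (1 - α)) < |u x| :=
  stmt4_general α B hα1 hB u hC1 hode h0
end

section
/- Let 0 < α < 1 and γ ≥ (2-α)/(2-2α). Let ω ⊆ ℂ be open and h : ω → ℂ a C¹ (hence smooth) nonvanishing function satisfying ∂h/∂z̄ = |h|^α on ω. Then on ω the inequality Δ(|h|^((1-α)γ)) ≥ 2α(1-α)γ·|h|^((1-α)(γ-2)) holds. -/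
open Complex ContinuousLinearMap Topology

lemma aux_bound (N s t A : ℝ) (hN : 0 ≤ N) (hs : 0 ≤ s) (ht : 0 ≤ t)
    (hA2 : A^2 ≤ N^2 * s) :
    0 ≤ N * (s + t^2) - 2*t*A ∧ 0 ≤ N * (s + t^2) + 2*t*A := by
  have key : (2*t*A)^2 ≤ (N*(s+t^2))^2 := by
    nlinarith [sq_nonneg (s - t^2), mul_nonneg (mul_nonneg ht ht) (sub_nonneg.2 hA2),
      sq_nonneg N, mul_nonneg (sq_nonneg N) (sq_nonneg (s - t^2))]
  have hpos : 0 ≤ N*(s+t^2) := by positivity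
  have habs : |2*t*A| ≤ N*(s+t^2) := by
    rw [abs_le]
    constructor <;> nlinarith [abs_nonneg (2*t*A), _root_.sq_abs (2*t*A)]
  constructor <;> cases' abs_le.mp habs with hl hr <;> linarith

lemma core_ineq (a b X Y p1 p2 t : ℝ) (hb1 : 0 ≤ b - (b - 2 + a)) (hb2 : 0 ≤ b + (b - 2 + a))
    (ht : 0 ≤ t) :
    0 ≤ (b - 2 + a) * t * ((X^2 - Y^2) * p1 + 2*X*Y*p2)
        + (b/2) * (X^2 + Y^2) * (p1^2 + p2^2 + t^2) := by
  have hA2 : ((X^2 - Y^2) * p1 + 2*X*Y*p2)^2 ≤ ((X^2+Y^2))^2 * (p1^2+p2^2) := by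
    nlinarith [sq_nonneg ((X^2 - Y^2)*p2 - 2*X*Y*p1)]
  obtain ⟨h1, h2⟩ := aux_bound (X^2+Y^2) (p1^2+p2^2) t ((X^2 - Y^2) * p1 + 2*X*Y*p2)
    (by positivity) (by positivity) ht hA2
  nlinarith [mul_nonneg hb1 h1, mul_nonneg hb2 h2]

/-- Laplacian of a real-valued function on ℂ ≅ ℝ². -/
noncomputable def lap2 (v : ℂ → ℝ) (z : ℂ) : ℝ :=
  iteratedFDeriv ℝ 2 v z ![1, 1] + iteratedFDeriv ℝ 2 v z ![Complex.I, Complex.I]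

/-- The Cauchy–Riemann operator ∂/∂z̄ = (1/2)(∂/∂x + i ∂/∂y). -/
noncomputable def dbar (h : ℂ → ℂ) (z : ℂ) : ℂ :=
  (1 / 2) * (fderiv ℝ h z 1 + Complex.I * fderiv ℝ h z Complex.I)

set_option maxHeartbeats 1000000 in
theorem stmt5 (α γ : ℝ) (hα0 : 0 < α) (hα1 : α < 1) (hγ : (2 - α) / (2 - 2 * α) ≤ γ)
    (ω : Set ℂ) (hω : IsOpen ω) (h : ℂ → ℂ)
    (hsmooth : ContDiffOn ℝ (⊤ : ℕ∞) h ω)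
    (hne : ∀ z ∈ ω, h z ≠ 0)
    (heq : ∀ z ∈ ω, dbar h z = ((‖h z‖ ^ α : ℝ) : ℂ)) :
    ∀ z ∈ ω, 2 * α * (1 - α) * γ * ‖h z‖ ^ ((1 - α) * (γ - 2)) ≤
      lap2 (fun w => ‖h w‖ ^ ((1 - α) * γ)) z := by
  intro z hz
  -- basic facts about the exponents
  have h1α : (0:ℝ) < 1 - α := by linarith
  have hγpos : 0 < γ := lt_of_lt_of_le (div_pos (by linarith) (by linarith)) hγ
  have hβge : 1 - α/2 ≤ (1 - α) * γ := by
    have h2 : (1 - α) * ((2 - α) / (2 - 2*α)) ≤ (1 - α) * γ := mul_le_mul_of_nonneg_left hγ h1α.le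
    have hden : (2:ℝ) - 2*α ≠ 0 := by linarith
    have h3 : (1 - α) * ((2 - α) / (2 - 2*α)) = 1 - α/2 := by field_simp
    linarith [h3 ▸ h2]
  set c : ℝ := (1 - α) * γ / 2 with hcdef
  have hcpos : 0 < c := by rw [hcdef]; positivity
  -- differentiability facts
  have hsm2 : ContDiffOn ℝ 2 h ω := hsmooth.of_le (WithTop.coe_le_coe.mpr le_top)
  have hdiff : ∀ w ∈ ω, HasFDerivAt h (fderiv ℝ h w) w := fun w hw =>
    ((hsm2.differentiableOn (by norm_num)).differentiableAt (hω.mem_nhds hw)).hasFDerivAt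
  have hdh : ContDiffOn ℝ 1 (fderiv ℝ h) ω :=
    ((contDiffOn_succ_iff_fderiv_of_isOpen (n := 1) hω).mp (hsmooth.of_le (WithTop.coe_le_coe.mpr le_top))).2.2
  have hdhz : DifferentiableAt ℝ (fderiv ℝ h) z :=
    (hdh.differentiableOn (by norm_num)).differentiableAt (hω.mem_nhds hz)
  set H := fderiv ℝ (fderiv ℝ h) z with hHdef
  have hH : HasFDerivAt (fderiv ℝ h) H z := hdhz.hasFDerivAt
  have hsymm : H 1 Complex.I = H Complex.I 1 :=
    second_derivative_symmetric_of_eventually_of_real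
      ((hω.eventually_mem hz).mono (fun w hw => hdiff w hw)) hH 1 Complex.I
  have hgd : ∀ e : ℂ, HasFDerivAt (fun w => fderiv ℝ h w e) (H.flip e) z := by
    intro e
    have h1 := (ContinuousLinearMap.apply ℝ ℂ e).hasFDerivAt.comp z hH
    have h2 : (ContinuousLinearMap.apply ℝ ℂ e).comp H = H.flip e := by ext v; simp
    rwa [h2] at h1
  -- N = |h|^2 and its derivative
  set N : ℂ → ℝ := fun w => ‖h w‖^2 with hNdef
  have hNpos : ∀ w ∈ ω, 0 < N w := fun w hw => pow_pos (norm_pos_iff.mpr (hne w hw)) 2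
  have hNd : ∀ w ∈ ω, HasFDerivAt N (2 • (innerSL ℝ (h w)).comp (fderiv ℝ h w)) w :=
    fun w hw => (hdiff w hw).norm_sq
  have habs : ∀ (x : ℝ) (w : ℂ), ‖h w‖ ^ x = N w ^ (x/2) := by
    intro x w
    show ‖h w‖ ^ x = (‖h w‖^2) ^ (x/2)
    rw [← Real.rpow_natCast ‖h w‖ 2, ← Real.rpow_mul (norm_nonneg _)]
    congr 1; push_cast; ring
  -- v = N ^ c
  set v : ℂ → ℝ := fun w => N w ^ c with hvdef
  have hfun : (fun w => ‖h w‖ ^ ((1 - α) * γ)) = v := by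
    funext w
    rw [habs ((1-α)*γ) w, hvdef, hcdef]
  rw [hfun, habs ((1-α)*(γ-2)) z]
  -- v is C^2 at z
  have hNC2 : ContDiffAt ℝ 2 N z := ((hsm2 z hz).contDiffAt (hω.mem_nhds hz)).norm_sq ℂ
  have hvC2 : ContDiffAt ℝ 2 v z :=
    (Real.contDiffAt_rpow_const_of_ne (hNpos z hz).ne').comp z hNC2
  have hvd1 : DifferentiableAt ℝ (fderiv ℝ v) z :=
    (hvC2.fderiv_right (m := 1) (le_refl _)).differentiableAt (by norm_num)
  -- reduce lap2 to directional derivatives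
  have hlap : ∀ e : ℂ, fderiv ℝ (fderiv ℝ v) z e e = fderiv ℝ (fun w => fderiv ℝ v w e) z e := by
    intro e
    have h1 := (ContinuousLinearMap.apply ℝ ℝ e).hasFDerivAt.comp z hvd1.hasFDerivAt
    have h2 : (fun w => fderiv ℝ v w e) = (⇑((apply ℝ ℝ) e) ∘ fderiv ℝ v) := rfl
    rw [h2, h1.fderiv]
    simp
  have hlap2 : lap2 v z = fderiv ℝ (fun w => fderiv ℝ v w 1) z 1
      + fderiv ℝ (fun w => fderiv ℝ v w Complex.I) z Complex.I := by
    rw [lap2, iteratedFDeriv_two_apply, iteratedFDeriv_two_apply]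
    simp [hlap]
  -- first derivative of v on a neighborhood
  have hv' : ∀ w ∈ ω, HasFDerivAt v
      ((c * N w ^ (c-1)) • (2 • (innerSL ℝ (h w)).comp (fderiv ℝ h w))) w := fun w hw =>
    (Real.hasDerivAt_rpow_const (p := c)
      (Or.inl (hNpos w hw).ne')).comp_hasFDerivAt w (hNd w hw)
  have hvfd : ∀ e : ℂ, (fun w => fderiv ℝ v w e) =ᶠ[𝓝 z]
      (fun w => c * N w ^ (c-1) * (2 * ((inner ℝ (h w) (fderiv ℝ h w e)) : ℝ))) := by
    intro e
    filter_upwards [hω.eventually_mem hz] with w hw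
    rw [(hv' w hw).fderiv]
    simp [mul_assoc]
    left; left; ring
  -- second derivative values
  have hFe : ∀ e : ℂ, fderiv ℝ
      (fun w => c * N w ^ (c-1) * (2 * ((inner ℝ (h w) (fderiv ℝ h w e)) : ℝ))) z e
      = (c * N z ^ (c-1)) * (2 * (((inner ℝ (h z) (H e e)) : ℝ)
            + ((inner ℝ (fderiv ℝ h z e) (fderiv ℝ h z e)) : ℝ)))
        + (2 * ((inner ℝ (h z) (fderiv ℝ h z e)) : ℝ))
            * (c * ((c-1) * N z ^ (c-1-1) * (2 * ((inner ℝ (h z) (fderiv ℝ h z e)) : ℝ)))) := by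
    intro e
    have hP : HasFDerivAt (fun w => N w ^ (c-1))
        (((c-1) * N z ^ (c-1-1)) • (2 • (innerSL ℝ (h z)).comp (fderiv ℝ h z))) z :=
      (Real.hasDerivAt_rpow_const (p := c-1)
        (Or.inl (hNpos z hz).ne')).comp_hasFDerivAt z (hNd z hz)
    have hCP : HasFDerivAt (fun w => c * N w ^ (c-1))
        (c • (((c-1) * N z ^ (c-1-1)) • (2 • (innerSL ℝ (h z)).comp (fderiv ℝ h z)))) z :=
      hP.const_mul c
    have hgde : DifferentiableAt ℝ (fun w => fderiv ℝ h w e) z := (hgd e).differentiableAt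
    have hInd : DifferentiableAt ℝ (fun w => ((inner ℝ (h w) (fderiv ℝ h w e)) : ℝ)) z :=
      (hdiff z hz).differentiableAt.inner ℝ hgde
    have hQd : DifferentiableAt ℝ (fun w => 2 * ((inner ℝ (h w) (fderiv ℝ h w e)) : ℝ)) z :=
      hInd.const_mul 2
    rw [fderiv_fun_mul hCP.differentiableAt hQd]
    simp only [ContinuousLinearMap.add_apply, ContinuousLinearMap.smul_apply, smul_eq_mul]
    rw [fderiv_const_mul hInd 2, hCP.fderiv]
    simp only [ContinuousLinearMap.smul_apply, smul_eq_mul]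
    rw [fderiv_inner_apply (𝕜 := ℝ) (hdiff z hz).differentiableAt hgde]
    rw [(hgd e).fderiv]
    simp only [ContinuousLinearMap.flip_apply, ContinuousLinearMap.smul_apply,
      ContinuousLinearMap.comp_apply, innerSL_apply_apply, smul_eq_mul]
    rw [real_inner_comm (fderiv ℝ h z e) (h z)]
    ring
  -- the PDE, multiplied by 2
  have hPDE : ∀ w ∈ ω, fderiv ℝ h w 1 + Complex.I * fderiv ℝ h w Complex.I
      = ((2 * N w ^ (α/2) : ℝ) : ℂ) := by
    intro w hw
    have := heq w hw
    rw [dbar, habs α w] at this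
    push_cast
    linear_combination 2 * this
  -- derivative of the PDE
  have hLd : HasFDerivAt (fun w => fderiv ℝ h w 1 + Complex.I * fderiv ℝ h w Complex.I)
      (H.flip 1 + Complex.I • H.flip Complex.I) z :=
    (hgd 1).add ((hgd Complex.I).const_mul Complex.I)
  have hRd : HasFDerivAt (fun w => ((2 * N w ^ (α/2) : ℝ) : ℂ))
      (Complex.ofRealCLM.comp ((2:ℝ) • ((α/2 * N z ^ (α/2-1)) •
        (2 • (innerSL ℝ (h z)).comp (fderiv ℝ h z))))) z := by
    have hr : HasFDerivAt (fun w => 2 * N w ^ (α/2))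
        ((2:ℝ) • ((α/2 * N z ^ (α/2-1)) • (2 • (innerSL ℝ (h z)).comp (fderiv ℝ h z)))) z :=
      (((Real.hasDerivAt_rpow_const (p := α/2)
        (Or.inl (hNpos z hz).ne')).comp_hasFDerivAt z (hNd z hz)).const_mul 2)
    exact Complex.ofRealCLM.hasFDerivAt.comp z hr
  have hPDEd : ∀ e : ℂ, H e 1 + Complex.I * H e Complex.I
      = ((α * N z ^ (α/2-1) * (2 * ((inner ℝ (h z) (fderiv ℝ h z e)) : ℝ)) : ℝ) : ℂ) := by
    intro e
    have hev : (fun w => fderiv ℝ h w 1 + Complex.I * fderiv ℝ h w Complex.I)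
        =ᶠ[𝓝 z] (fun w => ((2 * N w ^ (α/2) : ℝ) : ℂ)) := by
      filter_upwards [hω.eventually_mem hz] with w hw using hPDE w hw
    have heq2 := hev.fderiv_eq (𝕜 := ℝ)
    rw [hLd.fderiv, hRd.fderiv] at heq2
    have happ := congrFun (congrArg (fun (L : ℂ →L[ℝ] ℂ) => (L : ℂ → ℂ)) heq2) e
    simp only [ContinuousLinearMap.add_apply, ContinuousLinearMap.smul_apply,
      ContinuousLinearMap.flip_apply, ContinuousLinearMap.comp_apply,
      Complex.ofRealCLM_apply, innerSL_apply_apply, smul_eq_mul] at happ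
    rw [happ]
    push_cast
    ring
  -- assemble the Laplacian value
  have hlapval : lap2 v z
      = (c * N z ^ (c-1)) * (2 * (((inner ℝ (h z) (H 1 1)) : ℝ)
            + ((inner ℝ (fderiv ℝ h z 1) (fderiv ℝ h z 1)) : ℝ)))
        + (2 * ((inner ℝ (h z) (fderiv ℝ h z 1)) : ℝ))
            * (c * ((c-1) * N z ^ (c-1-1) * (2 * ((inner ℝ (h z) (fderiv ℝ h z 1)) : ℝ))))
      + ((c * N z ^ (c-1)) * (2 * (((inner ℝ (h z) (H Complex.I Complex.I)) : ℝ)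
            + ((inner ℝ (fderiv ℝ h z Complex.I) (fderiv ℝ h z Complex.I)) : ℝ)))
        + (2 * ((inner ℝ (h z) (fderiv ℝ h z Complex.I)) : ℝ))
            * (c * ((c-1) * N z ^ (c-1-1)
                * (2 * ((inner ℝ (h z) (fderiv ℝ h z Complex.I)) : ℝ))))) := by
    rw [hlap2, (hvfd 1).fderiv_eq, (hvfd Complex.I).fderiv_eq, hFe 1, hFe Complex.I]
  -- real components
  have hip : ∀ u w : ℂ, ((inner ℝ u w) : ℝ) = u.re * w.re + u.im * w.im := by
    intro u w
    simp [Complex.inner, Complex.mul_re]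
    ring
  simp only [hip] at hlapval
  have hNzpos : 0 < N z := hNpos z hz
  -- component equations of the differentiated PDE
  have e1 : (H 1 1).re - (H 1 Complex.I).im
      = α * N z ^ (α/2-1) * (2 * ((h z).re * (fderiv ℝ h z 1).re + (h z).im * (fderiv ℝ h z 1).im)) := by
    have := congrArg Complex.re (hPDEd 1)
    simp [hip, Complex.add_re, Complex.mul_re] at this
    linarith
  have e2 : (H 1 1).im + (H 1 Complex.I).re = 0 := by
    have := congrArg Complex.im (hPDEd 1)
    simp [hip, Complex.add_im, Complex.mul_im] at this
    linarith
  have e3 : (H Complex.I 1).re - (H Complex.I Complex.I).im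
      = α * N z ^ (α/2-1) * (2 * ((h z).re * (fderiv ℝ h z Complex.I).re + (h z).im * (fderiv ℝ h z Complex.I).im)) := by
    have := congrArg Complex.re (hPDEd Complex.I)
    simp [hip, Complex.add_re, Complex.mul_re] at this
    linarith
  have e4 : (H Complex.I 1).im + (H Complex.I Complex.I).re = 0 := by
    have := congrArg Complex.im (hPDEd Complex.I)
    simp [hip, Complex.add_im, Complex.mul_im] at this
    linarith
  have hsymm_re : (H 1 Complex.I).re = (H Complex.I 1).re := by rw [hsymm]
  have hsymm_im : (H 1 Complex.I).im = (H Complex.I 1).im := by rw [hsymm]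
  have hs1 : (H 1 1).re + (H Complex.I Complex.I).re
      = α * N z ^ (α/2-1) * (2 * ((h z).re * (fderiv ℝ h z 1).re + (h z).im * (fderiv ℝ h z 1).im)) := by
    linarith
  have hs2 : (H 1 1).im + (H Complex.I Complex.I).im
      = -(α * N z ^ (α/2-1) * (2 * ((h z).re * (fderiv ℝ h z Complex.I).re + (h z).im * (fderiv ℝ h z Complex.I).im))) := by
    linarith
  -- components of the PDE at z
  have hPz := hPDE z hz
  have hbim : (fderiv ℝ h z Complex.I).im = (fderiv ℝ h z 1).re - 2 * N z ^ (α/2) := by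
    have := congrArg Complex.re hPz
    simp [Complex.add_re, Complex.mul_re] at this
    linarith
  have hbre : (fderiv ℝ h z Complex.I).re = -(fderiv ℝ h z 1).im := by
    have := congrArg Complex.im hPz
    simp [Complex.add_im, Complex.mul_im] at this
    linarith
  clear hvfd hFe hPDEd hPDE hLd hRd hv' hlap hlap2 hvd1 hvC2 hNC2 hfun hvdef
  clear hdiff hdh hdhz hH hgd hNd e1 e2 e3 e4 hsymm hsymm_re hsymm_im hPz hip habs
  -- abbreviations
  set X := (h z).re with hXdef
  set Y := (h z).im with hYdef
  set ar := (fderiv ℝ h z 1).re with hardef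
  set ai := (fderiv ℝ h z 1).im with haidef
  set t := N z ^ (α/2) with htdef
  set K := N z ^ (c-2) with hKdef
  have hKpos : 0 < K := Real.rpow_pos_of_pos hNzpos _
  have htpos : 0 < t := Real.rpow_pos_of_pos hNzpos _
  have hNXY : N z = X^2 + Y^2 := by
    show ‖h z‖^2 = _
    rw [Complex.sq_norm, Complex.normSq_apply]
    ring
  -- rpow identities
  have hr1 : N z ^ (c-1) = K * N z := by
    rw [hKdef, show c-1 = (c-2)+1 by ring, Real.rpow_add_one hNzpos.ne']
  have hr2 : N z ^ (c-1-1) = K := by rw [hKdef]; congr 1; ring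
  have hr3 : N z ^ (α/2-1) * N z = t := by
    rw [htdef, ← Real.rpow_add_one hNzpos.ne']
    congr 1; ring
  have hr4 : N z ^ ((1-α)*(γ-2)/2) = K * (N z * (t*t)) := by
    have e : K * (N z * (t * t)) = N z ^ ((c-2) + (1 + (α/2 + α/2))) := by
      rw [Real.rpow_add hNzpos, Real.rpow_add hNzpos, Real.rpow_add hNzpos, Real.rpow_one,
        hKdef, htdef]
    rw [e]; congr 1; rw [hcdef]; ring
  -- scaled sums
  have hs1' : N z * ((H 1 1).re + (H Complex.I Complex.I).re)
      = α * t * (2*(X*ar+Y*ai)) := by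
    rw [hs1]
    linear_combination (α * (2*(X*ar+Y*ai))) * hr3
  have hs2' : N z * ((H 1 1).im + (H Complex.I Complex.I).im)
      = -(α * t * (2*(X*(-ai)+Y*(ar-2*t)))) := by
    rw [hs2, hbre, hbim]
    linear_combination (-(α * (2*(X*(-ai)+Y*(ar-2*t))))) * hr3
  rw [hNXY] at hs1' hs2'
  -- rewrite the goal
  rw [hr4, hlapval, hr1, hr2, hbre, hbim, hNXY]
  have hL : 2*α*(1-α)*γ = 4*α*c := by rw [hcdef]; ring
  rw [hL]
  have hGT : c * (K * (X ^ 2 + Y ^ 2)) *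
          (2 * (X * (H 1 1).re + Y * (H 1 1).im + (ar * ar + ai * ai))) +
        2 * (X * ar + Y * ai) * (c * ((c - 1) * K * (2 * (X * ar + Y * ai)))) +
      (c * (K * (X ^ 2 + Y ^ 2)) *
          (2 * (X * (H Complex.I Complex.I).re + Y * (H Complex.I Complex.I).im +
            (-ai * -ai + (ar - 2 * t) * (ar - 2 * t)))) +
        2 * (X * -ai + Y * (ar - 2 * t)) *
          (c * ((c - 1) * K * (2 * (X * -ai + Y * (ar - 2 * t))))))
      = c * (c-1) * K * ((2*(X*ar+Y*ai))^2 + (2*(X*(-ai)+Y*(ar-2*t)))^2)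
        + 2*c*K*(X^2+Y^2)*(ar^2+ai^2+ai^2+(ar-2*t)^2)
        + 2*c*α*(K*t)*(X*(2*(X*ar+Y*ai)) - Y*(2*(X*(-ai)+Y*(ar-2*t)))) := by
    linear_combination (2*c*K*X) * hs1' + (2*c*K*Y) * hs2'
  rw [hGT]
  have core := core_ineq α (2*c) X Y (ar - t) ai t (by linarith)
    (by rw [hcdef]; linarith) htpos.le
  linarith [mul_nonneg (mul_nonneg hcpos.le hKpos.le) core]
end

section
/- Let 0 < α < 1, let ω ⊆ ℂ be open, and let h : ω → ℂ be smooth, nonvanishing, satisfying ∂h/∂z̄ = |h|^α. Write h = ρ^(1/(1-α))·e^(iφ/(1-α)) locally, i.e., let g = h^(1-α) with polar form g = ρe^(iφ), ρ > 0. Then ρ and φ satisfy the system ρ_x - ρφ_y = 2(1-α)cos(φ/(1-α)) and ρ_y + ρφ_x = -2(1-α)sin(φ/(1-α)). -/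
theorem stmt7 (α : ℝ) (hα0 : 0 < α) (hα1 : α < 1)
    (ω : Set ℂ) (hω : IsOpen ω) (h : ℂ → ℂ)
    (hsmooth : ContDiffOn ℝ (⊤ : ℕ∞) h ω)
    (hne : ∀ z ∈ ω, h z ≠ 0)
    (heq : ∀ z ∈ ω, dbar h z = ((‖h z‖ ^ α : ℝ) : ℂ))
    (ρ φ : ℂ → ℝ)
    (hρ : ContDiffOn ℝ (⊤ : ℕ∞) ρ ω) (hφ : ContDiffOn ℝ (⊤ : ℕ∞) φ ω)
    (hρpos : ∀ z ∈ ω, 0 < ρ z)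
    (hpolar : ∀ z ∈ ω,
      h z = ((ρ z : ℂ) ^ ((1 / (1 - α) : ℝ) : ℂ)) * Complex.exp (Complex.I * (φ z / (1 - α)))) :
    ∀ z ∈ ω,
      fderiv ℝ ρ z 1 - ρ z * fderiv ℝ φ z Complex.I
          = 2 * (1 - α) * Real.cos (φ z / (1 - α)) ∧
      fderiv ℝ ρ z Complex.I + ρ z * fderiv ℝ φ z 1
          = -(2 * (1 - α) * Real.sin (φ z / (1 - α))) := by
  intro z hz
  have h1α : (1 : ℝ) - α ≠ 0 := by linarith
  set c : ℝ := 1 / (1 - α) with hc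
  -- u is the explicit exponential form of h
  set u : ℂ → ℂ := fun y => Complex.exp ((c : ℂ) * ((Real.log (ρ y) : ℂ) + Complex.I * (φ y))) with hu
  have hueq : ∀ y ∈ ω, h y = u y := by
    intro y hy
    rw [hpolar y hy, hu]
    have hρy := hρpos y hy
    simp only
    rw [Complex.cpow_def_of_ne_zero (by exact_mod_cast hρy.ne')]
    rw [← Complex.ofReal_log hρy.le, ← Complex.exp_add]
    congr 1
    rw [hc]
    push_cast
    ring
  -- differentiability facts
  have hmem : ω ∈ nhds z := hω.mem_nhds hz
  have hρd : HasFDerivAt ρ (fderiv ℝ ρ z) z :=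
    ((hρ.contDiffAt hmem).differentiableAt (by simp)).hasFDerivAt
  have hφd : HasFDerivAt φ (fderiv ℝ φ z) z :=
    ((hφ.contDiffAt hmem).differentiableAt (by simp)).hasFDerivAt
  set Dρ := fderiv ℝ ρ z
  set Dφ := fderiv ℝ φ z
  have hr0 : ρ z ≠ 0 := (hρpos z hz).ne'
  have hlogd : HasFDerivAt (fun y => Real.log (ρ y)) ((ρ z)⁻¹ • Dρ) z := by
    exact (Real.hasDerivAt_log hr0).comp_hasFDerivAt z hρd
  have hwd : HasFDerivAt (fun y => (c : ℂ) * ((Real.log (ρ y) : ℂ) + Complex.I * (φ y)))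
      ((c : ℂ) • (Complex.ofRealCLM.comp ((ρ z)⁻¹ • Dρ) + Complex.I • (Complex.ofRealCLM.comp Dφ))) z := by
    exact ((Complex.ofRealCLM.hasFDerivAt.comp z hlogd).add
      ((Complex.ofRealCLM.hasFDerivAt.comp z hφd).const_mul Complex.I)).const_mul _
  have hud : HasFDerivAt u
      (u z • ((c : ℂ) • (Complex.ofRealCLM.comp ((ρ z)⁻¹ • Dρ) + Complex.I • (Complex.ofRealCLM.comp Dφ)))) z :=
    hwd.cexp
  have hhu : h =ᶠ[nhds z] u := Filter.eventuallyEq_of_mem hmem hueq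
  have hhd : HasFDerivAt h
      (u z • ((c : ℂ) • (Complex.ofRealCLM.comp ((ρ z)⁻¹ • Dρ) + Complex.I • (Complex.ofRealCLM.comp Dφ)))) z :=
    hud.congr_of_eventuallyEq hhu
  have hfd := hhd.fderiv
  -- abbreviations
  set r := ρ z
  set θ := φ z
  set a := Dρ 1
  set b := Dρ Complex.I
  set p := Dφ 1
  set q := Dφ Complex.I
  -- |h z| ^ α
  have huz : u z = (Real.exp (c * Real.log r) : ℂ) * Complex.exp (Complex.I * (c * θ)) := by
    rw [hu]
    simp only
    rw [Complex.ofReal_exp, ← Complex.exp_add]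
    congr 1
    push_cast
    ring
  have habs : (‖h z‖ ^ α : ℝ) = Real.exp (α * (c * Real.log r)) := by
    rw [hueq z hz, huz]
    rw [norm_mul, Complex.norm_exp, Complex.norm_real, Real.norm_eq_abs]
    have : (Complex.I * ((c : ℂ) * (θ : ℂ))).re = 0 := by simp
    rw [this, Real.exp_zero, mul_one, abs_of_pos (Real.exp_pos _)]
    rw [← Real.exp_log (Real.exp_pos (c * Real.log r)) ]
    rw [Real.exp_log (Real.exp_pos _), ← Real.exp_mul]
    ring_nf
  -- evaluate the derivative of h
  have hD1 : fderiv ℝ h z 1 = u z * ((c : ℂ) * (((r⁻¹ * a : ℝ) : ℂ) + Complex.I * (p : ℝ))) := by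
    rw [hfd]
    simp [ContinuousLinearMap.smul_apply, ContinuousLinearMap.add_apply,
      ContinuousLinearMap.coe_comp', Function.comp_apply, Complex.ofRealCLM_apply,
      ContinuousLinearMap.coe_smul', Pi.smul_apply, smul_eq_mul]
    push_cast
    ring
  have hDI : fderiv ℝ h z Complex.I = u z * ((c : ℂ) * (((r⁻¹ * b : ℝ) : ℂ) + Complex.I * (q : ℝ))) := by
    rw [hfd]
    simp [ContinuousLinearMap.smul_apply, ContinuousLinearMap.add_apply,
      ContinuousLinearMap.coe_comp', Function.comp_apply, Complex.ofRealCLM_apply,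
      ContinuousLinearMap.coe_smul', Pi.smul_apply, smul_eq_mul]
    push_cast
    ring
  have hE := heq z hz
  rw [dbar, hD1, hDI, habs, huz] at hE
  have hEr : Real.exp (c * Real.log r) = Real.exp (α * (c * Real.log r)) * r := by
    have h2 := Real.exp_add (α * (c * Real.log r)) (Real.log r)
    rw [Real.exp_log (hρpos z hz)] at h2
    rw [← h2]
    congr 1
    have hc' : c * (1 - α) = 1 := by rw [hc, one_div, inv_mul_cancel₀ h1α]
    linear_combination (Real.log r) * hc'
  rw [hEr] at hE
  have hXY : Complex.exp (Complex.I * ((c * θ : ℝ) : ℂ)) *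
      Complex.exp (-(Complex.I * ((c * θ : ℝ) : ℂ))) = 1 := by
    rw [← Complex.exp_add]
    simp
  have hc1 : (c : ℂ) * (1 - (α : ℂ)) = 1 := by
    have : c * (1 - α) = 1 := by rw [hc, one_div, inv_mul_cancel₀ h1α]
    exact_mod_cast this
  have hE0 : (Real.exp (α * (c * Real.log r)) : ℂ) ≠ 0 := by
    exact_mod_cast (Real.exp_pos _).ne'
  have hrC : (r : ℂ) ≠ 0 := by exact_mod_cast hr0
  have key : ((a : ℂ) - r * q) + Complex.I * ((b : ℂ) + r * p)
      = 2 * (1 - (α : ℂ)) * Complex.exp (-(Complex.I * ((c * θ : ℝ) : ℂ))) := by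
    push_cast at hE ⊢
    field_simp at hE
    push_cast at hXY
    rw [show (c:ℂ) * Complex.I * (θ:ℂ) = Complex.I * ((c:ℂ) * (θ:ℂ)) by ring] at hE
    set A : ℂ := Complex.exp ((α:ℂ) * ((c:ℂ) * ((Real.log r : ℝ):ℂ))) with hA
    set X : ℂ := Complex.exp (Complex.I * ((c:ℂ) * (θ:ℂ))) with hX
    have hcC : (c:ℂ) ≠ 0 :=
      Complex.ofReal_ne_zero.mpr (by rw [hc]; exact one_div_ne_zero h1α)
    have hA0 : A ≠ 0 := Complex.exp_ne_zero _
    have hX0 : X ≠ 0 := Complex.exp_ne_zero _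
    apply mul_left_cancel₀ (mul_ne_zero (mul_ne_zero (mul_ne_zero hA0 hrC) hcC) hX0)
    linear_combination A*(r:ℂ)*hE - 2*A*(r:ℂ)*(1-(α:ℂ))*(c:ℂ)*hXY - 2*A*(r:ℂ)*hc1
      - A*(r:ℂ)^2*(c:ℂ)*X*(q:ℂ)*Complex.I_sq
  have hexp : Complex.exp (-(Complex.I * ((c * θ : ℝ) : ℂ)))
      = ((Real.cos (c * θ) : ℝ) : ℂ) - Complex.I * ((Real.sin (c * θ) : ℝ) : ℂ) := by
    rw [show -(Complex.I * ((c * θ : ℝ) : ℂ)) = ((-(c * θ) : ℝ) : ℂ) * Complex.I by push_cast; ring,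
      Complex.exp_mul_I]
    rw [← Complex.ofReal_cos, ← Complex.ofReal_sin]
    simp [Real.cos_neg, Real.sin_neg]
    ring
  rw [hexp] at key
  have hre := congrArg Complex.re key
  have him := congrArg Complex.im key
  simp only [Complex.add_re, Complex.mul_re, Complex.sub_re, Complex.add_im, Complex.mul_im,
    Complex.sub_im, Complex.I_re, Complex.I_im, Complex.ofReal_re, Complex.ofReal_im,
    Complex.one_re, Complex.one_im, Complex.re_ofNat, Complex.im_ofNat,
    mul_zero, zero_mul, mul_one, one_mul, sub_zero, zero_sub, add_zero, zero_add, neg_zero,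
    neg_neg] at hre him
  have hθ : θ / (1 - α) = c * θ := by rw [hc]; ring
  rw [hθ]
  constructor
  · rw [hre]
  · rw [him]; ring
end

section
/- Suppose f : D₁ → D₁ is holomorphic with f(0) = 0 and |f'(0)| = δ > 0. For any η ∈ (0, δ), set s = ((δ-η)/(1-ηδ))·η. Then the restriction of f to the disk D_η takes each value w ∈ D_s exactly once, i.e., for every w with |w| < s there is a unique z with |z| < η and f(z) = w. -/
/-!
Write `f z = z g(z)` with `g = dslope f 0`, so that `‖g‖ ≤ 1` and `‖g 0‖ = δ`. The Schwarz–Pick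
lemma for `g` gives `‖g z‖ ≥ (δ - ‖z‖) / (1 - δ ‖z‖)`, hence `‖f‖ ≥ s` on the circle `‖z‖ = η`.
As `f` is an open map with `f 0 = 0`, the connected disk `D_s`, which misses `f` of that circle,
lies in `f(D_η)`. If some `w ∈ D_s` had two preimages `y₁ ≠ y₂` in `D_η`, the self-map
`mobius w ∘ f` of the unit disk would vanish at both, and the Schwarz lemma with two zeros gives
`‖w‖ ≤ ‖y₁‖ ‖y₂‖`; together with the lower bound for `‖f y₂‖` this forces `‖w‖ ≥ s`.
-/

open Metric Set Filter Topology ComplexConjugate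

noncomputable def mobius (v u : ℂ) : ℂ := (u - v) / (1 - conj v * u)

section Mobius

variable {u v : ℂ}

theorem sq_norm_one_sub_conj_mul_sub_sq_norm_sub (u v : ℂ) :
    ‖1 - conj v * u‖ ^ 2 - ‖u - v‖ ^ 2 = (1 - ‖u‖ ^ 2) * (1 - ‖v‖ ^ 2) := by
  simp only [Complex.sq_norm, Complex.normSq_apply, Complex.sub_re, Complex.sub_im,
    Complex.mul_re, Complex.mul_im, Complex.conj_re, Complex.conj_im, Complex.one_re,
    Complex.one_im]
  ring

theorem one_sub_mul_le_norm_one_sub_conj_mul (u v : ℂ) :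
    1 - ‖v‖ * ‖u‖ ≤ ‖1 - conj v * u‖ := by
  simpa using norm_sub_norm_le (1 : ℂ) (conj v * u)

theorem one_sub_conj_mul_ne_zero (hv : ‖v‖ < 1) (hu : ‖u‖ ≤ 1) : 1 - conj v * u ≠ 0 := by
  rw [← norm_pos_iff]
  nlinarith [one_sub_mul_le_norm_one_sub_conj_mul u v, norm_nonneg v]

theorem norm_sub_le_norm_one_sub_conj_mul (hv : ‖v‖ ≤ 1) (hu : ‖u‖ ≤ 1) :
    ‖u - v‖ ≤ ‖1 - conj v * u‖ := by
  have hid := sq_norm_one_sub_conj_mul_sub_sq_norm_sub u v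
  have hu2 : ‖u‖ ^ 2 ≤ 1 := by nlinarith [norm_nonneg u]
  have hv2 : ‖v‖ ^ 2 ≤ 1 := by nlinarith [norm_nonneg v]
  exact (pow_le_pow_iff_left₀ (norm_nonneg _) (norm_nonneg _) two_ne_zero).mp (by nlinarith)

theorem norm_mobius_le_one (hv : ‖v‖ < 1) (hu : ‖u‖ ≤ 1) : ‖mobius v u‖ ≤ 1 := by
  rw [mobius, norm_div]
  exact div_le_one_of_le₀ (norm_sub_le_norm_one_sub_conj_mul hv.le hu) (norm_nonneg _)

theorem differentiableOn_mobius (hv : ‖v‖ < 1) :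
    DifferentiableOn ℂ (mobius v) (closedBall 0 1) :=
  DifferentiableOn.div (by fun_prop) (by fun_prop)
    fun u hu ↦ one_sub_conj_mul_ne_zero hv (mem_closedBall_zero_iff.mp hu)

theorem mobius_self (v : ℂ) : mobius v v = 0 := by simp [mobius]

theorem mobius_zero (v : ℂ) : mobius v 0 = -v := by simp [mobius]

theorem sub_mul_norm_one_sub_conj_mul_le (hvu : ‖v‖ ≤ ‖u‖) (hu : ‖u‖ ≤ 1) :
    (‖u‖ - ‖v‖) * ‖1 - conj v * u‖ ≤ (1 - ‖v‖ * ‖u‖) * ‖u - v‖ := by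
  have hid := sq_norm_one_sub_conj_mul_sub_sq_norm_sub u v
  have hlow := one_sub_mul_le_norm_one_sub_conj_mul u v
  have h1 : 0 ≤ 1 - ‖v‖ * ‖u‖ := by nlinarith [norm_nonneg v]
  have h2 : 0 ≤ (1 - ‖u‖ ^ 2) * (1 - ‖v‖ ^ 2) := by
    apply mul_nonneg <;> nlinarith [norm_nonneg v]
  refine (pow_le_pow_iff_left₀ (mul_nonneg (by linarith) (norm_nonneg _))
    (mul_nonneg h1 (norm_nonneg _)) two_ne_zero).mp ?_
  have h4 : (1 - ‖v‖ * ‖u‖) ^ 2 ≤ ‖1 - conj v * u‖ ^ 2 := pow_le_pow_left₀ h1 hlow 2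
  nlinarith [mul_le_mul_of_nonneg_left h4 h2]

theorem norm_one_sub_conj_mul_comm (u v : ℂ) : ‖1 - conj u * v‖ = ‖1 - conj v * u‖ := by
  rw [← Complex.norm_conj]
  simp [mul_comm]

theorem sub_le_norm_mul_of_norm_mobius_le {t : ℝ} (hv : ‖v‖ < 1) (hu : ‖u‖ ≤ 1) (ht : t ≤ 1)
    (h : ‖mobius v u‖ ≤ t) : ‖v‖ - t ≤ ‖u‖ * (1 - ‖v‖ * t) := by
  have ht0 : 0 ≤ t := (norm_nonneg _).trans h
  rcases le_or_gt ‖v‖ ‖u‖ with hvu | huv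
  · have hv2 : ‖v‖ * ‖v‖ * t ≤ t :=
      mul_le_of_le_one_left ht0 (by nlinarith [norm_nonneg v])
    nlinarith [mul_le_mul_of_nonneg_right hvu (by nlinarith [norm_nonneg v] : 0 ≤ 1 - ‖v‖ * t)]
  · have hD : 0 < ‖1 - conj v * u‖ := norm_pos_iff.mpr (one_sub_conj_mul_ne_zero hv hu)
    have hsub : ‖u - v‖ ≤ t * ‖1 - conj v * u‖ := by
      rwa [mobius, norm_div, div_le_iff₀ hD] at h
    have hpseudo := sub_mul_norm_one_sub_conj_mul_le huv.le hv.le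
    rw [norm_one_sub_conj_mul_comm, norm_sub_rev v u] at hpseudo
    have : ‖v‖ - ‖u‖ ≤ (1 - ‖u‖ * ‖v‖) * t := by
      refine le_of_mul_le_mul_right ?_ hD
      nlinarith [mul_le_mul_of_nonneg_left hsub
        (by nlinarith [norm_nonneg u] : 0 ≤ 1 - ‖u‖ * ‖v‖)]
    nlinarith

end Mobius

theorem norm_mobius_apply_le_of_mapsTo_ball {g : ℂ → ℂ}
    (hg : DifferentiableOn ℂ g (ball 0 1)) (hmaps : MapsTo g (ball 0 1) (closedBall 0 1))
    (hg0 : ‖g 0‖ < 1) {z : ℂ} (hz : ‖z‖ < 1) : ‖mobius (g 0) (g z)‖ ≤ ‖z‖ :=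
  Complex.norm_le_norm_of_mapsTo_ball ((differentiableOn_mobius hg0).comp hg hmaps)
    (fun _ hu ↦ mem_closedBall_zero_iff.mpr <|
      norm_mobius_le_one hg0 (mem_closedBall_zero_iff.mp (hmaps hu)))
    (mobius_self _) hz

theorem norm_mul_sub_le_norm_apply_mul {f : ℂ → ℂ} (hd : DifferentiableOn ℂ f (ball 0 1))
    (hmaps : MapsTo f (ball 0 1) (closedBall 0 1)) (hf0 : f 0 = 0) {z : ℂ} (hz : ‖z‖ < 1) :
    ‖z‖ * (‖deriv f 0‖ - ‖z‖) ≤ ‖f z‖ * (1 - ‖deriv f 0‖ * ‖z‖) := by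
  set g := dslope f 0
  have h0 : (0 : ℂ) ∈ ball 0 1 := mem_ball_self one_pos
  have hzb : z ∈ ball 0 1 := mem_ball_zero_iff.mpr hz
  have hg : DifferentiableOn ℂ g (ball 0 1) :=
    (Complex.differentiableOn_dslope (isOpen_ball.mem_nhds h0)).mpr hd
  have hgmaps : MapsTo g (ball 0 1) (closedBall 0 1) := fun u hu ↦ by
    simpa using Complex.norm_dslope_le_div_of_mapsTo_ball hd (by rwa [hf0]) hu
  have hfz : f z = z * g z := by simpa [hf0] using (sub_smul_dslope f 0 z).symm
  have hg_lower : ‖g 0‖ - ‖z‖ ≤ ‖g z‖ * (1 - ‖g 0‖ * ‖z‖) := by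
    rcases (mem_closedBall_zero_iff.mp (hgmaps h0)).lt_or_eq with hlt | heq
    · exact sub_le_norm_mul_of_norm_mobius_le hlt (mem_closedBall_zero_iff.mp (hgmaps hzb))
        hz.le (norm_mobius_apply_le_of_mapsTo_ball hg hgmaps hlt hz)
    · -- `‖g‖ ≤ 1` attains its maximum at `0`, so `‖g‖ = 1` on the disk
      have hmax : IsMaxOn (norm ∘ g) (ball 0 1) 0 := fun u hu ↦ by
        simpa [heq] using hgmaps hu
      have := Complex.norm_eqOn_of_isPreconnected_of_isMaxOn (convex_ball _ _).isPreconnected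
        isOpen_ball hg h0 hmax hzb
      simp only [Function.comp_apply, Function.const_apply, heq] at this
      rw [this, heq]
      linarith
  rw [show g 0 = deriv f 0 from dslope_same f 0] at hg_lower
  rw [hfz, norm_mul]
  nlinarith [norm_nonneg z]

theorem div_mul_le_norm_apply {f : ℂ → ℂ} (hd : DifferentiableOn ℂ f (ball 0 1))
    (hmaps : MapsTo f (ball 0 1) (closedBall 0 1)) (hf0 : f 0 = 0) {z : ℂ} (hz : ‖z‖ < 1) :
    (‖deriv f 0‖ - ‖z‖) / (1 - ‖z‖ * ‖deriv f 0‖) * ‖z‖ ≤ ‖f z‖ := by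
  have hδ1 := Complex.norm_deriv_le_one_of_mapsTo_ball hd (by rwa [hf0]) one_pos
  rw [div_mul_eq_mul_div, div_le_iff₀ (by nlinarith [norm_nonneg z])]
  linarith [norm_mul_sub_le_norm_apply_mul hd hmaps hf0 hz]

/-- `F` divided by the Möbius factor `mobius c`, the singularity at `c` being removed by
`dslope`. -/
noncomputable def divMobius (F : ℂ → ℂ) (c ζ : ℂ) : ℂ := dslope F c ζ * (1 - conj c * ζ)

section DivMobius

variable {F : ℂ → ℂ} {c : ℂ}

theorem DifferentiableOn.divMobius (hd : DifferentiableOn ℂ F (ball 0 1)) (hc : ‖c‖ < 1) :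
    DifferentiableOn ℂ (divMobius F c) (ball 0 1) :=
  ((Complex.differentiableOn_dslope (isOpen_ball.mem_nhds (mem_ball_zero_iff.mpr hc))).mpr
    hd).mul (by fun_prop)

theorem norm_eq_norm_sub_mul_norm_dslope (hFc : F c = 0) (z : ℂ) :
    ‖F z‖ = ‖z - c‖ * ‖dslope F c z‖ := by
  simpa [hFc] using congrArg norm (sub_smul_dslope F c z).symm

theorem sub_mul_norm_divMobius_le {ζ : ℂ} (hFc : F c = 0) (hFζ : ‖F ζ‖ ≤ 1)
    (hcζ : ‖c‖ ≤ ‖ζ‖) (hζ : ‖ζ‖ ≤ 1) :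
    (‖ζ‖ - ‖c‖) * ‖divMobius F c ζ‖ ≤ 1 - ‖c‖ * ‖ζ‖ := by
  rw [divMobius, norm_mul]
  calc (‖ζ‖ - ‖c‖) * (‖dslope F c ζ‖ * ‖1 - conj c * ζ‖)
      = ‖dslope F c ζ‖ * ((‖ζ‖ - ‖c‖) * ‖1 - conj c * ζ‖) := by ring
    _ ≤ ‖dslope F c ζ‖ * ((1 - ‖c‖ * ‖ζ‖) * ‖ζ - c‖) :=
        mul_le_mul_of_nonneg_left (sub_mul_norm_one_sub_conj_mul_le hcζ hζ) (norm_nonneg _)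
    _ = (1 - ‖c‖ * ‖ζ‖) * ‖F ζ‖ := by rw [norm_eq_norm_sub_mul_norm_dslope hFc]; ring
    _ ≤ 1 - ‖c‖ * ‖ζ‖ :=
        mul_le_of_le_one_right (by nlinarith [norm_nonneg c, norm_nonneg ζ]) hFζ

theorem norm_divMobius_le_one (hd : DifferentiableOn ℂ F (ball 0 1))
    (hmaps : MapsTo F (ball 0 1) (closedBall 0 1)) (hc : ‖c‖ < 1) (hFc : F c = 0)
    {z : ℂ} (hz : ‖z‖ < 1) : ‖divMobius F c z‖ ≤ 1 := by
  set H := divMobius F c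
  have hbound : ∀ r ∈ Ioo (max ‖c‖ ‖z‖) 1, (r - ‖c‖) * ‖H z‖ + ‖c‖ * r ≤ 1 := by
    rintro r ⟨hr, hr1⟩
    have hcr : ‖c‖ < r := (le_max_left _ _).trans_lt hr
    have hzr : ‖z‖ < r := (le_max_right _ _).trans_lt hr
    have hr0 : 0 < r := (norm_nonneg c).trans_lt hcr
    suffices ‖H z‖ ≤ (1 - ‖c‖ * r) / (r - ‖c‖) by
      rw [le_div_iff₀ (by linarith)] at this
      linarith
    refine Complex.norm_le_of_forall_mem_frontier_norm_le (isBounded_ball (x := 0) (r := r))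
      ((hd.divMobius hc).mono ?_).diffContOnCl (fun ζ hζ ↦ ?_) ?_
    · rw [closure_ball 0 hr0.ne']
      exact closedBall_subset_ball hr1
    · rw [frontier_ball 0 hr0.ne', mem_sphere_zero_iff_norm] at hζ
      have hζb : ζ ∈ ball (0 : ℂ) 1 := mem_ball_zero_iff.mpr (hζ.trans_lt hr1)
      rw [le_div_iff₀ (by linarith), mul_comm, ← hζ]
      exact sub_mul_norm_divMobius_le hFc (mem_closedBall_zero_iff.mp (hmaps hζb))
        (by linarith) (by linarith)
    · rw [closure_ball 0 hr0.ne']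
      exact mem_closedBall_zero_iff.mpr hzr.le
  have hlim : Tendsto (fun r : ℝ ↦ (r - ‖c‖) * ‖H z‖ + ‖c‖ * r) (𝓝[<] 1)
      (𝓝 ((1 - ‖c‖) * ‖H z‖ + ‖c‖ * 1)) :=
    tendsto_nhdsWithin_of_tendsto_nhds (Continuous.tendsto (by fun_prop) 1)
  have hle : (1 - ‖c‖) * ‖H z‖ + ‖c‖ * 1 ≤ 1 :=
    le_of_tendsto hlim (eventually_of_mem (Ioo_mem_nhdsLT (max_lt hc hz)) hbound)
  nlinarith

end DivMobius

theorem norm_apply_zero_le_mul_of_two_zeros {F : ℂ → ℂ} (hd : DifferentiableOn ℂ F (ball 0 1))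
    (hmaps : MapsTo F (ball 0 1) (closedBall 0 1)) {z₁ z₂ : ℂ} (h₁ : ‖z₁‖ < 1) (h₂ : ‖z₂‖ < 1)
    (hne : z₁ ≠ z₂) (hF₁ : F z₁ = 0) (hF₂ : F z₂ = 0) : ‖F 0‖ ≤ ‖z₁‖ * ‖z₂‖ := by
  set G := divMobius F z₁
  have hG : DifferentiableOn ℂ G (ball 0 1) := hd.divMobius h₁
  have hGmaps : MapsTo G (ball 0 1) (closedBall 0 1) := fun ζ hζ ↦
    mem_closedBall_zero_iff.mpr (norm_divMobius_le_one hd hmaps h₁ hF₁ (mem_ball_zero_iff.mp hζ))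
  have hG₂ : G z₂ = 0 := by
    simp [G, divMobius, dslope_of_ne _ hne.symm, slope_def_module, hF₁, hF₂]
  have hG0 : ‖G 0‖ ≤ ‖z₂‖ := by
    have := norm_divMobius_le_one hG hGmaps h₂ hG₂ (z := 0) (by simp)
    simp only [divMobius, mul_zero, sub_zero, mul_one] at this
    rw [norm_eq_norm_sub_mul_norm_dslope hG₂, zero_sub, norm_neg]
    exact mul_le_of_le_one_right (norm_nonneg _) this
  have hF0 : ‖F 0‖ = ‖z₁‖ * ‖G 0‖ := by
    simp [norm_eq_norm_sub_mul_norm_dslope hF₁, G, divMobius]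
  rw [hF0]
  exact mul_le_mul_of_nonneg_left hG0 (norm_nonneg _)

theorem ball_subset_image_ball_of_le_dist_sphere {E F : Type*} [MetricSpace E] [ProperSpace E]
    [NormedAddCommGroup F] [NormedSpace ℝ F] {f : E → F} {c : E} {r s : ℝ} (hr : 0 < r)
    (hf : ContinuousOn f (closedBall c r)) (hopen : IsOpen (f '' ball c r))
    (hs : ∀ z ∈ sphere c r, s ≤ dist (f z) (f c)) : ball (f c) s ⊆ f '' ball c r := by
  rcases le_or_gt s 0 with hs0 | hs0
  · simp [ball_eq_empty.mpr hs0]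
  set K := f '' closedBall c r
  have hK : IsClosed K := ((isCompact_closedBall c r).image_of_continuousOn hf).isClosed
  have hcover : ball (f c) s ⊆ f '' ball c r ∪ Kᶜ := by
    intro x hx
    by_cases hxK : x ∈ K
    · obtain ⟨z, hz, rfl⟩ := hxK
      rw [← ball_union_sphere] at hz
      rcases hz with hz | hz
      · exact Or.inl (mem_image_of_mem f hz)
      · exact absurd (hs z hz) (not_le.mpr (mem_ball.mp hx))
    · exact Or.inr hxK
  exact (convex_ball (f c) s).isPreconnected.subset_left_of_subset_union hopen hK.isOpen_compl
    (disjoint_compl_right_iff_subset.mpr (image_mono ball_subset_closedBall)) hcover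
    ⟨f c, mem_ball_self hs0, mem_image_of_mem f (mem_ball_self hr)⟩

theorem div_mul_le_of_two_preimages {f : ℂ → ℂ} (hd : DifferentiableOn ℂ f (ball 0 1))
    (hmaps : MapsTo f (ball 0 1) (ball 0 1)) (hf0 : f 0 = 0) {η : ℝ} (hη : η < ‖deriv f 0‖)
    {y₁ y₂ : ℂ} (hne : y₁ ≠ y₂) (h₁ : ‖y₁‖ < η) (h₂ : ‖y₂‖ < η) (hfy : f y₁ = f y₂) :
    (‖deriv f 0‖ - η) / (1 - η * ‖deriv f 0‖) * η ≤ ‖f y₁‖ := by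
  wlog hy₂ : y₂ ≠ 0 generalizing y₁ y₂
  · have hy₁ : y₁ ≠ 0 := fun h ↦ hne (h.trans (not_not.mp hy₂).symm)
    rw [hfy]
    exact this hne.symm h₂ h₁ hfy.symm hy₁
  set δ := ‖deriv f 0‖
  set w := f y₁
  have hmaps' : MapsTo f (ball 0 1) (closedBall 0 1) := hmaps.mono_right ball_subset_closedBall
  have hδ1 : δ ≤ 1 := Complex.norm_deriv_le_one_of_mapsTo_ball hd (by rwa [hf0]) one_pos
  have hy₁1 : ‖y₁‖ < 1 := by linarith
  have hy₂1 : ‖y₂‖ < 1 := by linarith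
  have hw : ‖w‖ < 1 := mem_ball_zero_iff.mp (hmaps (mem_ball_zero_iff.mpr hy₁1))
  -- `mobius w ∘ f` is a self-map of the disk vanishing at `y₁` and `y₂`
  have hprod : ‖w‖ ≤ ‖y₁‖ * ‖y₂‖ := by
    simpa [hf0, mobius_zero] using norm_apply_zero_le_mul_of_two_zeros
      ((differentiableOn_mobius hw).comp hd hmaps')
      (fun z hz ↦ mem_closedBall_zero_iff.mpr
        (norm_mobius_le_one hw (mem_closedBall_zero_iff.mp (hmaps' hz))))
      hy₁1 hy₂1 hne (mobius_self w) (by simp [w, hfy, mobius_self])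
  have hlow : ‖y₂‖ * (δ - ‖y₂‖) ≤ ‖w‖ * (1 - δ * ‖y₂‖) := by
    simpa [w, hfy] using norm_mul_sub_le_norm_apply_mul hd hmaps' hf0 hy₂1
  set a := ‖y₁‖
  set b := ‖y₂‖
  set m := ‖w‖
  have hb : 0 < b := norm_pos_iff.mpr hy₂
  have hδb : 0 < 1 - δ * b := by nlinarith
  have hδη : 0 < 1 - η * δ := by nlinarith
  have ha_low : δ - b ≤ a * (1 - δ * b) := by
    refine le_of_mul_le_mul_left ?_ hb
    nlinarith [mul_le_mul_of_nonneg_right hprod hδb.le]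
  have hη_low : δ + η * δ * b ≤ η + b := by nlinarith
  -- `t ↦ t (δ - t) / (1 - δ t)` is at least its value at `η` between `(δ - η) / (1 - δ η)` and `η`
  have hkey : η * (δ - η) * (1 - δ * b) ≤ b * (δ - b) * (1 - η * δ) := by
    nlinarith [mul_nonneg (sub_nonneg.mpr h₂.le) (sub_nonneg.mpr hη_low)]
  rw [div_mul_eq_mul_div, div_le_iff₀ hδη]
  refine le_of_mul_le_mul_right ?_ hδb
  nlinarith [mul_le_mul_of_nonneg_right hlow hδη.le]

theorem stmt12_general (f : ℂ → ℂ) (δ η s : ℝ)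
    (hdiff : DifferentiableOn ℂ f (Metric.ball 0 1))
    (hmaps : Set.MapsTo f (Metric.ball 0 1) (Metric.ball 0 1))
    (hf0 : f 0 = 0) (hδ : ‖deriv f 0‖ = δ)
    (hη0 : 0 < η) (hηδ : η < δ) (hs : s = (δ - η) / (1 - η * δ) * η) :
    ∀ w : ℂ, ‖w‖ < s →
      ∃! z : ℂ, ‖z‖ < η ∧ f z = w := by
  intro w hw
  subst hs
  have hmaps' : MapsTo f (ball 0 1) (closedBall 0 1) := hmaps.mono_right ball_subset_closedBall
  have hη1 : η < 1 :=
    hηδ.trans_le (hδ ▸ Complex.norm_deriv_le_one_of_mapsTo_ball hdiff (by rwa [hf0]) one_pos)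
  have hsphere : ∀ z ∈ sphere (0 : ℂ) η, (δ - η) / (1 - η * δ) * η ≤ dist (f z) (f 0) := by
    intro z hz
    rw [mem_sphere_zero_iff_norm] at hz
    simpa [hf0, hz, hδ] using div_mul_le_norm_apply hdiff hmaps' hf0 (hz.trans_lt hη1)
  have hopen : IsOpen (f '' ball 0 η) := by
    refine ((hdiff.analyticOnNhd isOpen_ball).is_constant_or_isOpen
      (convex_ball 0 1).isPreconnected).resolve_left ?_ _ (ball_subset_ball hη1.le) isOpen_ball
    rintro ⟨c, hc⟩
    have := hsphere η (by simp [hη0.le])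
    rw [hc _ (mem_ball_zero_iff.mpr (by simpa [abs_of_pos hη0])), hc 0 (mem_ball_self one_pos),
      dist_self] at this
    exact (norm_nonneg w).not_gt (hw.trans_le this)
  obtain ⟨z, hz, rfl⟩ : w ∈ f '' ball 0 η :=
    ball_subset_image_ball_of_le_dist_sphere hη0 (hdiff.continuousOn.mono
      (closedBall_subset_ball hη1)) hopen hsphere (by rwa [hf0, mem_ball_zero_iff])
  refine ⟨z, ⟨mem_ball_zero_iff.mp hz, rfl⟩, fun y ⟨hy, hfy⟩ ↦ by_contra fun hne ↦ ?_⟩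
  have := div_mul_le_of_two_preimages hdiff hmaps hf0 (hδ ▸ hηδ) hne hy
    (mem_ball_zero_iff.mp hz) hfy
  rw [hδ, hfy] at this
  exact hw.not_ge this

theorem stmt12 (f : ℂ → ℂ) (δ η s : ℝ)
    (hdiff : DifferentiableOn ℂ f (Metric.ball 0 1))
    (hmaps : Set.MapsTo f (Metric.ball 0 1) (Metric.ball 0 1))
    (hf0 : f 0 = 0) (hδ : ‖deriv f 0‖ = δ) (hδpos : 0 < δ)
    (hη0 : 0 < η) (hηδ : η < δ) (hs : s = (δ - η) / (1 - η * δ) * η) :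
    ∀ w : ℂ, ‖w‖ < s →
      ∃! z : ℂ, ‖z‖ < η ∧ f z = w :=
  stmt12_general f δ η s hdiff hmaps hf0 hδ hη0 hηδ hs
end

section
/- Let p ∈ ℝ, B > 0, C ≥ -1. Suppose u : (-1,1) → ℝ is C² on [0,1) and satisfies u(t)·u''(t) ≥ B·|u(t)|^p + C·(u'(t))² for all 0 < t < 1. If u(0) > 0 and u'(0) ≥ 0, then u(t) > 0 for all t ∈ [0,1). -/
/-!
Since `B |u|^p ≥ 0` and `C + 1 ≥ 0`, the differential inequality gives
`(u u')' = u'² + u u'' ≥ (C + 1) u'² + B |u|^p ≥ 0` on `(0, 1)`, whatever the sign of `u`.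
Hence `u u'` is nondecreasing and stays `≥ u(0) u'(0) ≥ 0`, so `(u²)' = 2 u u' ≥ 0` and
`u(t)² ≥ u(0)² > 0`. Thus `u` never vanishes on `[0, 1)`, and being continuous it keeps the
sign of `u(0)`.
-/

open Set

section Monotone

variable {u : ℝ → ℝ} {s : Set ℝ}

theorem monotoneOn_mul_derivWithin (hs : Convex ℝ s) (hu : DifferentiableOn ℝ u s)
    (hu' : DifferentiableOn ℝ (derivWithin u s) s)
    (h : ∀ t ∈ interior s,
      0 ≤ derivWithin u s t ^ 2 + u t * derivWithin (derivWithin u s) s t) :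
    MonotoneOn (fun t => u t * derivWithin u s t) s := by
  refine monotoneOn_of_hasDerivWithinAt_nonneg hs (hu.continuousOn.mul hu'.continuousOn)
    (fun t ht => ?_) (fun t ht => by simpa only [sq] using h t ht)
  have ht' := interior_subset ht
  exact ((hu t ht').hasDerivWithinAt.mul (hu' t ht').hasDerivWithinAt).mono interior_subset

theorem monotoneOn_sq_of_mul_derivWithin_nonneg (hs : Convex ℝ s) (hu : DifferentiableOn ℝ u s)
    (h : ∀ t ∈ interior s, 0 ≤ u t * derivWithin u s t) :
    MonotoneOn (fun t => u t ^ 2) s := by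
  refine monotoneOn_of_hasDerivWithinAt_nonneg hs (hu.continuousOn.pow 2)
    (fun t ht => ((hu t (interior_subset ht)).hasDerivWithinAt.pow 2).mono interior_subset)
    fun t ht => by simpa [mul_assoc] using mul_nonneg zero_le_two (h t ht)

end Monotone

theorem IsPreconnected.pos_of_ne_zero {X : Type*} [TopologicalSpace X] {s : Set X}
    {u : X → ℝ} {a : X} (hs : IsPreconnected s) (hu : ContinuousOn u s) (ha : a ∈ s)
    (hua : 0 < u a) (hne : ∀ t ∈ s, u t ≠ 0) : ∀ t ∈ s, 0 < u t := by
  intro t ht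
  by_contra! hut
  obtain ⟨z, hz, hz0⟩ := hs.intermediate_value ht ha hu ⟨hut, hua.le⟩
  exact hne z hz hz0

theorem sq_add_mul_nonneg_of_ge {p B C u u' u'' : ℝ} (hB : 0 ≤ B) (hC : -1 ≤ C)
    (h : u * u'' ≥ B * |u| ^ p + C * u' ^ 2) : 0 ≤ u' ^ 2 + u * u'' := by
  have hpow : 0 ≤ B * |u| ^ p := mul_nonneg hB (Real.rpow_nonneg (abs_nonneg u) p)
  nlinarith [sq_nonneg u']

theorem stmt18 (p B C : ℝ) (hB : 0 < B) (hC : -1 ≤ C) (u : ℝ → ℝ)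
    (hC2 : ContDiffOn ℝ 2 u (Set.Ico (0 : ℝ) 1))
    (hineq : ∀ t ∈ Set.Ioo (0 : ℝ) 1,
      u t * derivWithin (derivWithin u (Set.Ico (0 : ℝ) 1)) (Set.Ico (0 : ℝ) 1) t ≥
        B * |u t| ^ p + C * (derivWithin u (Set.Ico (0 : ℝ) 1) t) ^ 2)
    (h0 : 0 < u 0) (h0' : 0 ≤ derivWithin u (Set.Ico (0 : ℝ) 1) 0) :
    ∀ t ∈ Set.Ico (0 : ℝ) 1, 0 < u t := by
  have hu : DifferentiableOn ℝ u (Ico 0 1) := hC2.differentiableOn (by norm_num)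
  have hu' : DifferentiableOn ℝ (derivWithin u (Ico 0 1)) (Ico 0 1) :=
    (hC2.derivWithin (uniqueDiffOn_Ico 0 1) (m := 1) (by norm_num)).differentiableOn one_ne_zero
  have h0mem : (0 : ℝ) ∈ Ico 0 1 := left_mem_Ico.2 one_pos
  have hmul : MonotoneOn (fun t => u t * derivWithin u (Ico 0 1) t) (Ico 0 1) :=
    monotoneOn_mul_derivWithin (convex_Ico 0 1) hu hu' fun t ht => by
      rw [interior_Ico] at ht
      exact sq_add_mul_nonneg_of_ge hB.le hC (hineq t ht)
  have hsq : MonotoneOn (fun t => u t ^ 2) (Ico 0 1) :=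
    monotoneOn_sq_of_mul_derivWithin_nonneg (convex_Ico 0 1) hu fun t ht =>
      (mul_nonneg h0.le h0').trans (hmul h0mem (interior_subset ht) (interior_subset ht).1)
  refine (convex_Ico 0 1).isPreconnected.pos_of_ne_zero hu.continuousOn h0mem h0
    fun t ht hut => ?_
  exact (pow_pos h0 2).not_ge (by simpa [hut] using hsq h0mem ht ht.1)
end

section
/- Let B > 0, -1 ≤ C < 1, ε ≤ C, and M = ((1/2)(1-C)B)^(1/(1-ε)). Suppose u : (-1,1) → ℝ is C² on [0,1) and satisfies u(t)·u''(t) ≥ B·|u(t)|^(1+ε) + C·(u'(t))² for all 0 < t < 1. If u(0) > 0 and u'(0) ≥ 0, then sup_{0 ≤ y < 1} u(y) > M. -/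
/-!
Suppose `u ≤ M` on `[0, 1)`. Wherever `u > 0`, the inequality together with `u ≤ M` and
`ε ≤ C` gives `(u' u^(-C))' = u^(-C-1) (u u'' - C u'²) ≥ B M^(ε-C) =: c`, so `u' u^(-C) ≥ c t ≥ 0`;
hence `u` is nondecreasing as long as it is positive, and therefore stays positive on `[0, 1)`.
Integrating once more, `(u^(1-C))' ≥ (1 - C) c t` gives `u(b)^(1-C) ≥ u(0)^(1-C) + M^(1-C) b²`,
because the choice of `M` makes `(1 - C) c / 2 = M^(1-C)`. Letting `b → 1` contradicts `u(b) ≤ M`.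
-/

open Set Real Filter Topology

theorem sub_le_sub_of_hasDerivAt_le {f g f' g' : ℝ → ℝ} {a b : ℝ} (hab : a ≤ b)
    (hf : ContinuousOn f (Icc a b)) (hg : ContinuousOn g (Icc a b))
    (hf' : ∀ x ∈ Ioo a b, HasDerivAt f (f' x) x) (hg' : ∀ x ∈ Ioo a b, HasDerivAt g (g' x) x)
    (hle : ∀ x ∈ Ioo a b, g' x ≤ f' x) : g b - g a ≤ f b - f a := by
  have hmono : MonotoneOn (f - g) (Icc a b) := by
    refine monotoneOn_of_hasDerivWithinAt_nonneg (f' := f' - g') (convex_Icc a b) (hf.sub hg)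
      (fun x hx => ?_) (fun x hx => ?_) <;> rw [interior_Icc] at hx
    · exact ((hf' x hx).sub (hg' x hx)).hasDerivWithinAt
    · exact sub_nonneg.2 (hle x hx)
  have := hmono (left_mem_Icc.2 hab) (right_mem_Icc.2 hab) hab
  simp only [Pi.sub_apply] at this
  linarith

theorem forall_pos_of_le_while_pos {u : ℝ → ℝ} {a b : ℝ} (hu : ContinuousOn u (Ico a b))
    (ha : 0 < u a)
    (h : ∀ x ∈ Ico a b, (∀ t ∈ Icc a x, 0 < u t) → u a ≤ u x) : ∀ x ∈ Ico a b, 0 < u x := by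
  by_contra! ⟨x₀, hx₀, hux₀⟩
  set K := {t ∈ Ico a b | u t ≤ 0}
  have hK : K.Nonempty := ⟨x₀, hx₀, hux₀⟩
  have hKbdd : BddBelow K := ⟨a, fun t ht => ht.1.1⟩
  set t₁ := sInf K
  have ht₁ : t₁ ∈ Ico a b :=
    ⟨le_csInf hK fun t ht => ht.1.1, (csInf_le hKbdd ⟨hx₀, hux₀⟩).trans_lt hx₀.2⟩
  have hut₁ : u t₁ ≤ 0 :=
    (hu t₁ ht₁).mono (fun t ht => ht.1) |>.closure_le (csInf_mem_closure hK hKbdd)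
      continuousWithinAt_const fun t ht => ht.2
  have hat₁ : a < t₁ := ht₁.1.lt_of_ne fun heq => by rw [← heq] at hut₁; linarith
  have hbefore : ∀ x ∈ Ioo a t₁, u a ≤ u x := by
    refine fun x hx => h x ⟨hx.1.le, hx.2.trans ht₁.2⟩ fun t ht => ?_
    by_contra! hut
    exact (csInf_le hKbdd ⟨⟨ht.1, (ht.2.trans_lt hx.2).trans ht₁.2⟩, hut⟩).not_gt
      (ht.2.trans_lt hx.2)
  have : u a ≤ u t₁ :=
    continuousWithinAt_const.closure_le
      (by rw [closure_Ioo hat₁.ne]; exact right_mem_Icc.2 hat₁.le)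
      ((hu t₁ ht₁).mono fun t ht => ⟨ht.1.le, ht.2.trans ht₁.2⟩) hbefore
  linarith

-- The right-hand side is the derivative of `u' u^(-C)` where `u = x`, `u' = y'`, `u'' = y''`.
theorem le_mul_rpow_add_mul_mul_rpow {B C ε M x y' y'' : ℝ} (hB : 0 ≤ B) (hεC : ε ≤ C)
    (hx : 0 < x) (hxM : x ≤ M) (h : B * x ^ (1 + ε) + C * y' ^ 2 ≤ x * y'') :
    B * M ^ (ε - C) ≤ y'' * x ^ (-C) + y' * (y' * (-C) * x ^ (-C - 1)) := by
  have hsplit : x ^ (-C) = x ^ (-C - 1) * x := by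
    rw [← rpow_add_one hx.ne']; ring_nf
  calc B * M ^ (ε - C) ≤ B * x ^ (ε - C) :=
        mul_le_mul_of_nonneg_left (rpow_le_rpow_of_nonpos hx hxM (by linarith)) hB
    _ = x ^ (-C - 1) * (B * x ^ (1 + ε)) := by
        rw [show ε - C = (-C - 1) + (1 + ε) by ring, rpow_add hx]; ring
    _ ≤ x ^ (-C - 1) * (x * y'' - C * y' ^ 2) :=
        mul_le_mul_of_nonneg_left (by linarith) (rpow_pos_of_pos hx _).le
    _ = y'' * x ^ (-C) + y' * (y' * (-C) * x ^ (-C - 1)) := by rw [hsplit]; ring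

section Integration

variable {u u' u'' : ℝ → ℝ} {a b c B C ε M : ℝ}

theorem first_integral_bound (hab : a ≤ b) (hB : 0 ≤ B) (hεC : ε ≤ C)
    (hu : ContinuousOn u (Icc a b)) (hu'c : ContinuousOn u' (Icc a b))
    (hu' : ∀ x ∈ Ioo a b, HasDerivAt u (u' x) x) (hu'' : ∀ x ∈ Ioo a b, HasDerivAt u' (u'' x) x)
    (hpos : ∀ x ∈ Icc a b, 0 < u x) (hM : ∀ x ∈ Icc a b, u x ≤ M)
    (hineq : ∀ x ∈ Ioo a b, B * u x ^ (1 + ε) + C * u' x ^ 2 ≤ u x * u'' x) :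
    B * M ^ (ε - C) * (b - a) ≤ u' b * u b ^ (-C) - u' a * u a ^ (-C) := by
  rw [mul_sub]
  refine sub_le_sub_of_hasDerivAt_le hab
    (hu'c.mul (hu.rpow_const fun x hx => Or.inl (hpos x hx).ne'))
    (continuousOn_const.mul continuousOn_id)
    (fun x hx => (hu'' x hx).mul
      ((hu' x hx).rpow_const (Or.inl (hpos x (Ioo_subset_Icc_self hx)).ne')))
    (fun x _ => (hasDerivAt_id x).const_mul _) fun x hx => ?_
  rw [mul_one]
  exact le_mul_rpow_add_mul_mul_rpow hB hεC (hpos x (Ioo_subset_Icc_self hx))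
    (hM x (Ioo_subset_Icc_self hx)) (hineq x hx)

theorem second_integral_bound (hab : a ≤ b) (hC : C ≤ 1) (hu : ContinuousOn u (Icc a b))
    (hu' : ∀ x ∈ Ioo a b, HasDerivAt u (u' x) x) (hpos : ∀ x ∈ Icc a b, 0 < u x)
    (hlow : ∀ x ∈ Ioo a b, c * (x - a) ≤ u' x * u x ^ (-C)) :
    (1 - C) * c * (b - a) ^ 2 / 2 ≤ u b ^ (1 - C) - u a ^ (1 - C) := by
  have := sub_le_sub_of_hasDerivAt_le (f := fun x => u x ^ (1 - C))
    (g := fun x => (1 - C) * c * (x - a) ^ 2 / 2) (g' := fun x => (1 - C) * (c * (x - a))) hab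
    (hu.rpow_const fun x hx => Or.inl (hpos x hx).ne') (by fun_prop)
    (fun x hx => (hu' x hx).rpow_const (Or.inl (hpos x (Ioo_subset_Icc_self hx)).ne'))
    (fun x _ => ((((hasDerivAt_id x).sub_const a).pow 2).const_mul ((1 - C) * c)
      |>.div_const 2).congr_deriv (by simp only [id]; ring))
    fun x hx => ?_
  · simpa using this
  · rw [sub_sub_cancel_left, mul_right_comm, mul_comm (1 - C)]
    exact mul_le_mul_of_nonneg_right (hlow x hx) (by linarith)

end Integration

theorem ContDiffOn.hasDerivAt_derivWithin_Ico {f : ℝ → ℝ} {a b x : ℝ} {n : WithTop ℕ∞}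
    (hf : ContDiffOn ℝ n f (Ico a b)) (hn : n ≠ 0) (hx : x ∈ Ioo a b) :
    HasDerivAt f (derivWithin f (Ico a b) x) x :=
  ((hf.differentiableOn hn x (Ioo_subset_Ico_self hx)).hasDerivWithinAt).hasDerivAt
    (Ico_mem_nhds hx.1 hx.2)

theorem nonpos_of_forall_add_mul_sq_le {p K : ℝ} (h : ∀ b ∈ Ioo (0 : ℝ) 1, p + K * b ^ 2 ≤ K) :
    p ≤ 0 := by
  have hlim : Tendsto (fun b : ℝ => K - K * b ^ 2) (𝓝[<] 1) (𝓝 0) := by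
    have := ((by fun_prop : Continuous fun b : ℝ => K - K * b ^ 2).tendsto 1).mono_left
      (nhdsWithin_le_nhds (s := Iio 1))
    simpa using this
  exact ge_of_tendsto hlim <|
    mem_of_superset (Ioo_mem_nhdsLT one_pos) fun b hb => le_sub_iff_add_le.2 (h b hb)

structure IsBoundedSolution (B C ε M : ℝ) (u u' u'' : ℝ → ℝ) : Prop where
  continuousOn : ContinuousOn u (Ico 0 1)
  continuousOn_deriv : ContinuousOn u' (Ico 0 1)
  hasDerivAt : ∀ x ∈ Ioo 0 1, HasDerivAt u (u' x) x
  hasDerivAt_deriv : ∀ x ∈ Ioo 0 1, HasDerivAt u' (u'' x) x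
  le_bound : ∀ x ∈ Ico 0 1, u x ≤ M
  ineq : ∀ x ∈ Ioo 0 1, B * |u x| ^ (1 + ε) + C * u' x ^ 2 ≤ u x * u'' x

namespace IsBoundedSolution

variable {B C ε M : ℝ} {u u' u'' : ℝ → ℝ}

theorem mul_le_deriv_mul_rpow (h : IsBoundedSolution B C ε M u u' u'') (hB : 0 ≤ B)
    (hεC : ε ≤ C) (h0' : 0 ≤ u' 0) {x : ℝ} (hx : x ∈ Ico 0 1) (hpos : ∀ t ∈ Icc 0 x, 0 < u t) :
    B * M ^ (ε - C) * x ≤ u' x * u x ^ (-C) := by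
  have hIcc : Icc 0 x ⊆ Ico 0 1 := Icc_subset_Ico_right hx.2
  have hIoo : Ioo 0 x ⊆ Ioo 0 1 := Ioo_subset_Ioo_right hx.2.le
  have := first_integral_bound hx.1 hB hεC (h.continuousOn.mono hIcc)
    (h.continuousOn_deriv.mono hIcc) (fun t ht => h.hasDerivAt t (hIoo ht))
    (fun t ht => h.hasDerivAt_deriv t (hIoo ht)) hpos (fun t ht => h.le_bound t (hIcc ht))
    fun t ht => by simpa [abs_of_pos (hpos t (Ioo_subset_Icc_self ht))] using h.ineq t (hIoo ht)
  nlinarith [mul_nonneg h0' (rpow_pos_of_pos (hpos 0 (left_mem_Icc.2 hx.1)) (-C)).le]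

theorem pos (h : IsBoundedSolution B C ε M u u' u'') (hB : 0 ≤ B) (hεC : ε ≤ C)
    (h0 : 0 < u 0) (h0' : 0 ≤ u' 0) : ∀ x ∈ Ico 0 1, 0 < u x := by
  have hc : 0 ≤ B * M ^ (ε - C) :=
    mul_nonneg hB (rpow_pos_of_pos (h0.trans_le (h.le_bound 0 ⟨le_rfl, one_pos⟩)) _).le
  refine forall_pos_of_le_while_pos h.continuousOn h0 fun x hx hposx => ?_
  have := sub_le_sub_of_hasDerivAt_le (g := fun _ => (0 : ℝ)) (g' := fun _ => 0) hx.1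
    (h.continuousOn.mono (Icc_subset_Ico_right hx.2)) continuousOn_const
    (fun t ht => h.hasDerivAt t (Ioo_subset_Ioo_right hx.2.le ht))
    (fun t _ => hasDerivAt_const t 0) fun t ht => ?_
  · linarith
  have hts : t ∈ Ico 0 1 := ⟨ht.1.le, ht.2.trans hx.2⟩
  have hpost : ∀ τ ∈ Icc 0 t, 0 < u τ := fun τ hτ => hposx τ ⟨hτ.1, hτ.2.trans ht.2.le⟩
  exact (mul_nonneg_iff_of_pos_right (rpow_pos_of_pos (hpost t (right_mem_Icc.2 hts.1)) _)).1
    ((mul_nonneg hc hts.1).trans (h.mul_le_deriv_mul_rpow hB hεC h0' hts hpost))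

theorem rpow_add_mul_sq_le (h : IsBoundedSolution B C ε M u u' u'') (hB : 0 ≤ B)
    (hεC : ε ≤ C) (hC : C ≤ 1) (h0 : 0 < u 0) (h0' : 0 ≤ u' 0) {b : ℝ} (hb : b ∈ Ioo 0 1) :
    u 0 ^ (1 - C) + (1 - C) * (B * M ^ (ε - C)) / 2 * b ^ 2 ≤ M ^ (1 - C) := by
  have hpos := h.pos hB hεC h0 h0'
  have hb' : b ∈ Ico 0 1 := Ioo_subset_Ico_self hb
  have hIcc : Icc 0 b ⊆ Ico 0 1 := Icc_subset_Ico_right hb.2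
  have hIoo : Ioo 0 b ⊆ Ioo 0 1 := Ioo_subset_Ioo_right hb.2.le
  have hgrowth := second_integral_bound hb.1.le hC (h.continuousOn.mono hIcc)
    (fun t ht => h.hasDerivAt t (hIoo ht)) (fun t ht => hpos t (hIcc ht)) fun t ht => by
      rw [sub_zero]
      exact h.mul_le_deriv_mul_rpow hB hεC h0' (Ioo_subset_Ico_self (hIoo ht))
        fun τ hτ => hpos τ (Icc_subset_Ico_right (hIoo ht).2 hτ)
  have hub : u b ^ (1 - C) ≤ M ^ (1 - C) :=
    rpow_le_rpow (hpos b hb').le (h.le_bound b hb') (by linarith)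
  have : (1 - C) * (B * M ^ (ε - C)) * (b - 0) ^ 2 / 2 =
      (1 - C) * (B * M ^ (ε - C)) / 2 * b ^ 2 := by ring
  linarith

end IsBoundedSolution

theorem stmt19_general (B C ε : ℝ) (hB : 0 < B) (hC2 : C < 1) (hεC : ε ≤ C)
    (M : ℝ) (hM : M = ((1 / 2) * (1 - C) * B) ^ (1 / (1 - ε))) (u : ℝ → ℝ)
    (hreg : ContDiffOn ℝ 2 u (Set.Ico (0 : ℝ) 1))
    (hineq : ∀ t ∈ Set.Ioo (0 : ℝ) 1,
      u t * derivWithin (derivWithin u (Set.Ico (0 : ℝ) 1)) (Set.Ico (0 : ℝ) 1) t ≥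
        B * |u t| ^ (1 + ε) + C * (derivWithin u (Set.Ico (0 : ℝ) 1) t) ^ 2)
    (h0 : 0 < u 0) (h0' : 0 ≤ derivWithin u (Set.Ico (0 : ℝ) 1) 0) :
    ∃ y ∈ Set.Ico (0 : ℝ) 1, M < u y := by
  by_contra! huM
  have hu'reg := hreg.derivWithin (uniqueDiffOn_Ico 0 1) (m := 1) (by norm_num)
  have hsol : IsBoundedSolution B C ε M u _ _ :=
    { continuousOn := hreg.continuousOn
      continuousOn_deriv := hu'reg.continuousOn
      hasDerivAt := fun x hx => hreg.hasDerivAt_derivWithin_Ico two_ne_zero hx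
      hasDerivAt_deriv := fun x hx => hu'reg.hasDerivAt_derivWithin_Ico one_ne_zero hx
      le_bound := huM
      ineq := hineq }
  have hMpos : 0 < M := hM ▸ rpow_pos_of_pos (by nlinarith) _
  have hM1 : M ^ (1 - ε) = 1 / 2 * (1 - C) * B := by
    rw [hM, ← rpow_mul (by nlinarith), one_div_mul_cancel (by linarith), rpow_one]
  have hconst : (1 - C) * (B * M ^ (ε - C)) / 2 = M ^ (1 - C) := by
    rw [show 1 - C = (1 - ε) + (ε - C) by ring, rpow_add hMpos, hM1]
    ring
  refine (nonpos_of_forall_add_mul_sq_le (K := M ^ (1 - C)) fun b hb => ?_).not_gt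
    (rpow_pos_of_pos h0 (1 - C))
  have := hsol.rpow_add_mul_sq_le hB.le hεC hC2.le h0 h0' hb
  rwa [hconst] at this

theorem stmt19 (B C ε : ℝ) (hB : 0 < B) (hC1 : -1 ≤ C) (hC2 : C < 1) (hεC : ε ≤ C)
    (M : ℝ) (hM : M = ((1 / 2) * (1 - C) * B) ^ (1 / (1 - ε))) (u : ℝ → ℝ)
    (hreg : ContDiffOn ℝ 2 u (Set.Ico (0 : ℝ) 1))
    (hineq : ∀ t ∈ Set.Ioo (0 : ℝ) 1,
      u t * derivWithin (derivWithin u (Set.Ico (0 : ℝ) 1)) (Set.Ico (0 : ℝ) 1) t ≥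
        B * |u t| ^ (1 + ε) + C * (derivWithin u (Set.Ico (0 : ℝ) 1) t) ^ 2)
    (h0 : 0 < u 0) (h0' : 0 ≤ derivWithin u (Set.Ico (0 : ℝ) 1) 0) :
    ∃ y ∈ Set.Ico (0 : ℝ) 1, M < u y :=
  stmt19_general B C ε hB hC2 hεC M hM u hreg hineq h0 h0'
end
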